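/- arXiv:1908.03714 — 5 statements merged into one kernel-verified Lean document; each statement's English description precedes it below -/
import Mathlib

section
/- For every k ≥ 1 and all integers n₁, …, n_k ≥ 1, the graph F(n₁,…,n_k) is move equivalent via the moves (O) and (R+) to the graph F(n₁ + ⋯ + n_k) (a sink together with a source emitting n₁ + ⋯ + n_k edges to it). -/
open Classical

/-- A graph in the sense of graph C*-algebras: finitely many vertices,
countably many edges, with source and range maps. -/
structure CKGraph where
  V : Type
  E : Type
  finV : Finite V
  cntE : Countable E
  s : E → V
  r : E → V

attribute [instance] CKGraph.finV CKGraph.cntE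

namespace CKGraph

/-- Isomorphism of graphs: bijections on vertices and edges intertwining
the source and range maps. -/
def Iso (G H : CKGraph) : Prop :=
  ∃ (f : G.V ≃ H.V) (g : G.E ≃ H.E),
    (∀ e, H.s (g e) = f (G.s e)) ∧ (∀ e, H.r (g e) = f (G.r e))

/-- A vertex is a source if it receives no edges. -/
def IsSource (G : CKGraph) (v : G.V) : Prop := ∀ e, G.r e ≠ v

/-- A vertex is a sink if it emits no edges. -/
def IsSink (G : CKGraph) (v : G.V) : Prop := ∀ e, G.s e ≠ v

/-- A vertex is regular if it emits at least one and only finitely many edges. -/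
def Regular (G : CKGraph) (v : G.V) : Prop :=
  Nonempty {e : G.E // G.s e = v} ∧ Finite {e : G.E // G.s e = v}

/-- The outsplit graph of `G` at the vertex `w` with respect to the
partition of `s⁻¹(w)` encoded by `P`. -/
noncomputable def outsplit (G : CKGraph) (w : G.V) (n : ℕ)
    (P : {e : G.E // G.s e = w} → Fin n) : CKGraph where
  V := {v : G.V // v ≠ w} ⊕ Fin n
  E := {e : G.E // G.r e ≠ w} ⊕ ({e : G.E // G.r e = w} × Fin n)
  finV := inferInstance
  cntE := inferInstance
  s := Sum.elim
    (fun e => if h : G.s e.1 = w then Sum.inr (P ⟨e.1, h⟩) else Sum.inl ⟨G.s e.1, h⟩)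
    (fun ei => if h : G.s ei.1.1 = w then Sum.inr (P ⟨ei.1.1, h⟩)
               else Sum.inl ⟨G.s ei.1.1, h⟩)
  r := Sum.elim
    (fun e => Sum.inl ⟨G.r e.1, e.2⟩)
    (fun ei => Sum.inr ei.2)

/-- Move (O): `H` is obtained from `G` by an outsplit at a non-sink `w`
with respect to a partition of `s⁻¹(w)` into nonempty sets, at most one of
which is infinite. -/
def MoveO (G H : CKGraph) : Prop :=
  ∃ (w : G.V) (n : ℕ) (P : {e : G.E // G.s e = w} → Fin n),
    Nonempty {e : G.E // G.s e = w} ∧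
    Function.Surjective P ∧
    (∀ i j : Fin n, {e | P e = i}.Infinite → {e | P e = j}.Infinite → i = j) ∧
    Iso (G.outsplit w n P) H

/-- The insplit graph of `G` at the regular vertex `w` with respect to the
partition of `r⁻¹(w)` (into possibly empty sets) encoded by `P`. -/
noncomputable def insplit (G : CKGraph) (w : G.V) (n : ℕ)
    (P : {e : G.E // G.r e = w} → Fin n) : CKGraph where
  V := {v : G.V // v ≠ w} ⊕ Fin n
  E := {e : G.E // G.s e ≠ w} ⊕ ({e : G.E // G.s e = w} × Fin n)
  finV := inferInstance
  cntE := inferInstance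
  s := Sum.elim
    (fun e => Sum.inl ⟨G.s e.1, e.2⟩)
    (fun ei => Sum.inr ei.2)
  r := Sum.elim
    (fun e => if h : G.r e.1 = w then Sum.inr (P ⟨e.1, h⟩) else Sum.inl ⟨G.r e.1, h⟩)
    (fun ei => if h : G.r ei.1.1 = w then Sum.inr (P ⟨ei.1.1, h⟩)
               else Sum.inl ⟨G.r ei.1.1, h⟩)

/-- Move (I-): `H` is obtained from `G` by an insplit at a regular vertex `w`
with respect to a partition of `r⁻¹(w)` into `n ≥ 1` possibly empty sets. -/
def MoveIm (G H : CKGraph) : Prop :=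
  ∃ (w : G.V) (n : ℕ) (P : {e : G.E // G.r e = w} → Fin n),
    G.Regular w ∧ 1 ≤ n ∧ Iso (G.insplit w n P) H

/-- Move (I+): `G` and `H` are both obtained from a common graph `K` by
insplitting at the same regular vertex via two partitions with the same
number of (possibly empty) sets. -/
def MoveIp (G H : CKGraph) : Prop :=
  ∃ (K : CKGraph) (w : K.V) (n : ℕ)
    (P Q : {e : K.E // K.r e = w} → Fin n),
    K.Regular w ∧ 1 ≤ n ∧
    Iso (K.insplit w n P) G ∧ Iso (K.insplit w n Q) H

/-- The reduced graph of `G` at a regular vertex `w` supporting no loop. -/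
noncomputable def reduce (G : CKGraph) (w : G.V) : CKGraph where
  V := {v : G.V // v ≠ w} ⊕ Unit
  E := {e : G.E // G.s e ≠ w ∧ G.r e ≠ w} ⊕
       (({e : G.E // G.r e = w} × {f : G.E // G.s f = w}) ⊕ {f : G.E // G.s f = w})
  finV := inferInstance
  cntE := inferInstance
  s := Sum.elim
    (fun e => Sum.inl ⟨G.s e.1, e.2.1⟩)
    (Sum.elim
      (fun ef => if h : G.s ef.1.1 = w then Sum.inr () else Sum.inl ⟨G.s ef.1.1, h⟩)
      (fun _ => Sum.inr ()))
  r := Sum.elim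
    (fun e => Sum.inl ⟨G.r e.1, e.2.2⟩)
    (Sum.elim
      (fun ef => if h : G.r ef.2.1 = w then Sum.inr () else Sum.inl ⟨G.r ef.2.1, h⟩)
      (fun f => if h : G.r f.1 = w then Sum.inr () else Sum.inl ⟨G.r f.1, h⟩))

/-- Move (R+): `H` is obtained from `G` by a unital reduction at a regular
vertex `w` which supports no loop. -/
def MoveRp (G H : CKGraph) : Prop :=
  ∃ w : G.V, G.Regular w ∧ (∀ e : G.E, ¬ (G.s e = w ∧ G.r e = w)) ∧
    Iso (G.reduce w) H

/-- Two graphs are move equivalent via the relation `R` (describing the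
allowed moves) if there is a finite sequence of graphs starting at the first,
each obtained from the previous by a move in `R` or the inverse of such a
move, and ending at a graph isomorphic to the second. -/
def MoveEquiv (R : CKGraph → CKGraph → Prop) (G H : CKGraph) : Prop :=
  ∃ K, Relation.ReflTransGen (fun A B => R A B ∨ R B A) G K ∧ Iso K H

/-- The graph `G(c,n)`: a vertex with `c` loops, receiving `n` edges from a
second (source) vertex; for `n = 0` the source vertex is omitted. -/
def Gcn (c n : ℕ) : CKGraph where
  V := Unit ⊕ Fin (min n 1)
  E := Fin c ⊕ Fin n
  finV := inferInstance
  cntE := inferInstance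
  s := Sum.elim (fun _ => Sum.inl ()) (fun e => Sum.inr ⟨0, lt_min e.pos one_pos⟩)
  r := fun _ => Sum.inl ()

/-- The graph with adjacency matrix `A` (the `(i,j)` entry being the number
of edges from vertex `i` to vertex `j`). -/
def adjGraph {k : ℕ} (A : Fin k → Fin k → ℕ) : CKGraph where
  V := Fin k
  E := (i : Fin k) × (j : Fin k) × Fin (A i j)
  finV := inferInstance
  cntE := inferInstance
  s := fun e => e.1
  r := fun e => e.2.1


/-- Entry-wise product of two 2×2 matrices of natural numbers. -/
def matMul (A B : Fin 2 → Fin 2 → ℕ) : Fin 2 → Fin 2 → ℕ := fun i j => ∑ l, A i l * B l j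

/-- Matrix-vector product for 2×2 matrices of natural numbers. -/
def matVec (A : Fin 2 → Fin 2 → ℕ) (D : Fin 2 → ℕ) : Fin 2 → ℕ := fun i => ∑ l, A i l * D l

def T1 : Fin 2 → Fin 2 → ℕ := ![![1, 1], ![0, 1]]

def T2 : Fin 2 → Fin 2 → ℕ := ![![1, 0], ![1, 1]]

/-- The graph represented by the pair `(D, B)`: the graph `Γ(d₁-1, d₂-1; a)`
with `a i j = b j i + δ i j`. -/
def pairGraph (D : Fin 2 → ℕ) (B : Fin 2 → Fin 2 → ℕ) : CKGraph :=
  adjGraph ![![0, D 0 - 1, D 1 - 1], ![0, B 0 0 + 1, B 1 0], ![0, B 0 1, B 1 1 + 1]]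

/-- Number of edges emitted by the auxiliary source attached above vertex
`u_t` in the graph `F(n₁,…,n_k)`; here `n t` denotes `n_{t+1}` (0-indexed). -/
def srcCount (k : ℕ) (n : Fin k → ℕ) (t : Fin k) : ℕ :=
  if t.val + 1 < k then n t - 1 else n t

/-- The graph `F(n₁,…,n_k)` : vertices `u₀,…,u_{k-1}` (`u₀` a sink), one edge
`u_j → u_{j-1}` for `1 ≤ j ≤ k-1`, and for each `t` a source emitting
`srcCount` edges to `u_t` (present only when that count is positive), so that
the number of paths of length `i` ending at `u₀` is `nᵢ`. -/
def Fgraph (k : ℕ) (n : Fin k → ℕ) : CKGraph where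
  V := Fin k ⊕ {t : Fin k // 0 < srcCount k n t}
  E := {j : Fin k // 0 < j.val} ⊕ ((t : Fin k) × Fin (srcCount k n t))
  finV := inferInstance
  cntE := inferInstance
  s := Sum.elim (fun j => Sum.inl j.1) (fun te => Sum.inr ⟨te.1, te.2.pos⟩)
  r := Sum.elim
    (fun j => Sum.inl ⟨j.1.val - 1, lt_of_le_of_lt (Nat.sub_le _ _) j.1.isLt⟩)
    (fun te => Sum.inl te.1)

/-- The graph `E(n₁,…,n_k)` : a cycle `v₀ → v₁ → ⋯ → v_{k-1} → v₀` together
with a single extra vertex emitting `n i` edges to `v i`; the extra vertex is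
omitted when all `n i = 0`. -/
def Egraph (k : ℕ) (n : Fin k → ℕ) : CKGraph where
  V := Fin k ⊕ {_u : Unit // ∃ i, 0 < n i}
  E := Fin k ⊕ ((i : Fin k) × Fin (n i))
  finV := inferInstance
  cntE := inferInstance
  s := Sum.elim (fun j => Sum.inl j) (fun ie => Sum.inr ⟨(), ⟨ie.1, ie.2.pos⟩⟩)
  r := Sum.elim (fun j => Sum.inl ⟨(j.val + 1) % k, Nat.mod_lt _ j.pos⟩)
    (fun ie => Sum.inl ie.1)

/-- The graph `T k` : vertices `u₀,…,u_k`, countably infinitely many loops at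
`u₀` and exactly one edge `u_j → u_{j-1}` for `1 ≤ j ≤ k`. -/
def Tgraph (k : ℕ) : CKGraph where
  V := Fin (k + 1)
  E := ℕ ⊕ {j : Fin (k + 1) // 0 < j.val}
  finV := inferInstance
  cntE := inferInstance
  s := Sum.elim (fun _ => ⟨0, Nat.succ_pos k⟩) (fun j => j.1)
  r := Sum.elim (fun _ => ⟨0, Nat.succ_pos k⟩)
    (fun j => ⟨j.1.val - 1, lt_of_le_of_lt (Nat.sub_le _ _) j.1.isLt⟩)

/-- One-step reachability: there is an edge from `u` to `v`. -/
def Step (G : CKGraph) (u v : G.V) : Prop := ∃ e, G.s e = u ∧ G.r e = v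

/-- There is a (possibly empty) path from `u` to `v`. -/
def Reaches (G : CKGraph) : G.V → G.V → Prop := Relation.ReflTransGen G.Step

/-- `v` lies on a cycle: there is a nontrivial path from `v` back to `v`. -/
def OnCycle (G : CKGraph) (v : G.V) : Prop := ∃ u, G.Step v u ∧ G.Reaches u v

/-- The core of `G`: the vertices lying on cycles if `G` has a cycle, and
otherwise the sinks. -/
def core (G : CKGraph) (v : G.V) : Prop :=
  ((∃ u, G.OnCycle u) → G.OnCycle v) ∧ ((¬ ∃ u, G.OnCycle u) → G.IsSink v)

/-- A transitional vertex: neither a source nor in the core. -/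
def Transitional (G : CKGraph) (v : G.V) : Prop := ¬ G.IsSource v ∧ ¬ G.core v

/-- The core hypotheses: any two vertices on cycles are mutually connected by
paths; if there is a cycle there are no sinks, otherwise there is exactly one
sink; every vertex reaches the core; and every non-core vertex emits only
finitely many edges. -/
structure CoreHyp (G : CKGraph) : Prop where
  conn : ∀ u v, G.OnCycle u → G.OnCycle v → G.Reaches u v
  noSinks : (∃ v, G.OnCycle v) → ∀ v, ¬ G.IsSink v
  uniqueSink : (¬ ∃ v, G.OnCycle v) → ∃! v, G.IsSink v
  reach : ∀ v, ∃ c, G.core c ∧ G.Reaches v c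
  finEmit : ∀ v, ¬ G.core v → Finite {e : G.E // G.s e = v}

/-- The core subgraph: core vertices together with all edges between them. -/
def coreSubgraph (G : CKGraph) : CKGraph where
  V := {v : G.V // G.core v}
  E := {e : G.E // G.core (G.s e) ∧ G.core (G.r e)}
  finV := inferInstance
  cntE := inferInstance
  s := fun e => ⟨G.s e.1, e.2.1⟩
  r := fun e => ⟨G.r e.1, e.2.2⟩

end CKGraph

open CKGraph

namespace FStep

variable (K : ℕ) (n : Fin (K + 2) → ℕ)

/-- index K in Fin (K+2) -/
abbrev tK : Fin (K + 2) := ⟨K, by omega⟩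
/-- index K+1 in Fin (K+2) -/
abbrev tK1 : Fin (K + 2) := ⟨K + 1, by omega⟩
/-- index K in Fin (K+1) -/
abbrev sK : Fin (K + 1) := ⟨K, by omega⟩

/-- merged multiplicity function -/
def n' : Fin (K + 1) → ℕ :=
  fun i => if i.val = K then n (tK K) + n (tK1 K) else n ⟨i.val, by omega⟩

def m : ℕ := if n (tK K) = 1 then 2 else 3

lemma two_le_m : 2 ≤ m K n := by unfold m; split <;> omega
lemma m_le_three : m K n ≤ 3 := by unfold m; split <;> omega
lemma two_lt_m_iff : 2 < m K n ↔ n (tK K) ≠ 1 := by unfold m; split <;> simp_all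

lemma src_top : srcCount (K + 1) (n' K n) (sK K) = n (tK K) + n (tK1 K) := by
  unfold srcCount; rw [if_neg (show ¬((sK K).val + 1 < K + 1) by show ¬(K + 1 < K + 1); omega)]
  unfold n'; rw [if_pos (show (sK K).val = K from rfl)]

lemma src_lt (t : Fin (K + 1)) (h : t.val < K) :
    srcCount (K + 1) (n' K n) t = n ⟨t.val, by omega⟩ - 1 := by
  unfold srcCount; rw [if_pos (show t.val + 1 < K + 1 by omega)]
  unfold n'; rw [if_neg (by omega)]

lemma src2_lt (t : Fin (K + 2)) (h : t.val < K + 1) : srcCount (K + 2) n t = n t - 1 := by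
  unfold srcCount; rw [if_pos (show t.val + 1 < K + 2 by omega)]

lemma src2_top : srcCount (K + 2) n (tK1 K) = n (tK1 K) := by
  unfold srcCount; rw [if_neg (show ¬((tK1 K).val + 1 < K + 2) by show ¬(K + 2 < K + 2); omega)]

lemma sum_n' : ∑ i, n' K n i = ∑ i, n i := by
  rw [Fin.sum_univ_castSucc, Fin.sum_univ_castSucc (f := n), Fin.sum_univ_castSucc]
  have h1 : ∀ i : Fin K, n' K n i.castSucc = n i.castSucc.castSucc := by
    intro i
    unfold n'
    rw [if_neg (by have := i.isLt; simp [Fin.castSucc]; omega)]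
    congr 1
  rw [Finset.sum_congr rfl (fun i _ => h1 i)]
  have h2 : n' K n (Fin.last K) = n (tK K) + n (tK1 K) := by
    unfold n'; rw [if_pos (show (Fin.last K).val = K from rfl)]
  rw [h2]
  have h3 : n (Fin.last (K + 1)) = n (tK1 K) := by congr 1
  have h4 : n ((Fin.last K).castSucc) = n (tK K) := by congr 1
  rw [h3, h4]; omega

variable (hn : ∀ i, 1 ≤ n i)

def wV : (Fgraph (K + 2) n).V := Sum.inl (tK1 K)

def s0 : (Fgraph (K + 1) (n' K n)).V :=
  Sum.inr ⟨sK K, by rw [src_top]; have := hn (tK K); omega⟩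

lemma inl_ne_wV {v : Fin (K + 2)} (h : v.val ≠ K + 1) :
    (Sum.inl v : (Fgraph (K + 2) n).V) ≠ wV K n :=
  fun he => h (congrArg Fin.val (Sum.inl.inj he))

lemma inr_ne_wV {x : {t : Fin (K + 2) // 0 < srcCount (K + 2) n t}} :
    (Sum.inr x : (Fgraph (K + 2) n).V) ≠ wV K n :=
  fun he => by simp [wV] at he

lemma inl_ne_s0 {v : Fin (K + 1)} :
    (Sum.inl v : (Fgraph (K + 1) (n' K n)).V) ≠ s0 K n hn :=
  fun he => by simp [s0] at he

lemma inr_ne_s0 {x : {t : Fin (K + 1) // 0 < srcCount (K + 1) (n' K n) t}}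
    (h : x.1.val ≠ K) :
    (Sum.inr x : (Fgraph (K + 1) (n' K n)).V) ≠ s0 K n hn := by
  intro he
  unfold s0 at he
  rw [Sum.inr.injEq, Subtype.ext_iff, Fin.ext_iff] at he
  exact h he

lemma r_ne_s0 : ∀ e : (Fgraph (K + 1) (n' K n)).E,
    (Fgraph (K + 1) (n' K n)).r e ≠ s0 K n hn := by
  rintro (j | ⟨t, x⟩) h <;> simp [Fgraph, s0] at h

end FStep
namespace FStep

variable (K : ℕ) (n : Fin (K + 2) → ℕ) (hn : ∀ i, 1 ≤ n i)

def fV : ({v : (Fgraph (K + 1) (n' K n)).V // v ≠ s0 K n hn} ⊕ Fin (m K n)) →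
    ({v : (Fgraph (K + 2) n).V // v ≠ wV K n} ⊕ Unit)
  | Sum.inl ⟨Sum.inl u, _⟩ =>
      Sum.inl ⟨Sum.inl ⟨u.val, by have := u.isLt; omega⟩,
        inl_ne_wV K n (by show u.val ≠ K + 1; have := u.isLt; omega)⟩
  | Sum.inl ⟨Sum.inr ⟨t, ht⟩, hne⟩ =>
      Sum.inl ⟨Sum.inr ⟨⟨t.val, by have := t.isLt; omega⟩, by
          have htK : t.val < K := by
            rcases Nat.lt_or_ge t.val K with h | h
            · exact h
            · exact absurd (congrArg Sum.inr (Subtype.ext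
                (show t = sK K from Fin.ext (by show t.val = K; have := t.isLt; omega)))) hne
          rw [src2_lt K n ⟨t.val, by have := t.isLt; omega⟩ (by show t.val < K + 1; omega)]
          have ht' := ht
          rw [src_lt K n t htK] at ht'
          exact ht'⟩,
        inr_ne_wV K n⟩
  | Sum.inr j =>
      if h0 : j.val = 0 then Sum.inr ()
      else if h1 : j.val = 1 then
        Sum.inl ⟨Sum.inr ⟨tK1 K, by rw [src2_top]; exact hn (tK1 K)⟩, inr_ne_wV K n⟩
      else
        Sum.inl ⟨Sum.inr ⟨tK K, by
            have hj := j.isLt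
            have hm : n (tK K) ≠ 1 := (two_lt_m_iff K n).mp (by omega)
            rw [src2_lt K n (tK K) (by show K < K + 1; omega)]
            have := hn (tK K)
            omega⟩, inr_ne_wV K n⟩

def fVinv : ({v : (Fgraph (K + 2) n).V // v ≠ wV K n} ⊕ Unit) →
    ({v : (Fgraph (K + 1) (n' K n)).V // v ≠ s0 K n hn} ⊕ Fin (m K n))
  | Sum.inl ⟨Sum.inl u, hne⟩ =>
      Sum.inl ⟨Sum.inl ⟨u.val, by
          have h1 : u.val ≠ K + 1 :=
            fun h => hne (congrArg Sum.inl (show u = tK1 K from Fin.ext h))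
          have := u.isLt; omega⟩,
        inl_ne_s0 K n hn⟩
  | Sum.inl ⟨Sum.inr ⟨t, ht⟩, _⟩ =>
      if h : t.val < K then
        Sum.inl ⟨Sum.inr ⟨⟨t.val, by omega⟩, by
            rw [src_lt K n ⟨t.val, by omega⟩ (by show t.val < K; omega)]
            have ht' := ht
            rw [src2_lt K n t (by omega)] at ht'
            exact ht'⟩,
          inr_ne_s0 K n hn (by show t.val ≠ K; omega)⟩
      else if h2 : t.val = K then
        Sum.inr ⟨2, by
          have ht' := ht
          rw [src2_lt K n t (by omega)] at ht'
          rw [show t = tK K from Fin.ext h2] at ht'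
          have := hn (tK K)
          exact (two_lt_m_iff K n).mpr (by omega)⟩
      else
        Sum.inr ⟨1, by have := two_le_m K n; omega⟩
  | Sum.inr _ => Sum.inr ⟨0, by have := two_le_m K n; omega⟩

lemma fV_leftInv : ∀ v, fVinv K n hn (fV K n hn v) = v := by
  rintro (⟨(u | ⟨⟨tv, htv⟩, ht⟩), hne⟩ | ⟨jv, hj⟩)
  · rfl
  · have htK : tv < K := by
      by_contra hcon
      exact hne (congrArg Sum.inr (Subtype.ext
        (show (⟨tv, htv⟩ : Fin (K + 1)) = sK K from Fin.ext (by show tv = K; omega))))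
    simp only [fV, fVinv]
    rw [dif_pos (show tv < K from htK)]
  · by_cases h0 : jv = 0
    · subst h0; rfl
    · by_cases h1 : jv = 1
      · subst h1
        obtain ⟨p, q, hred⟩ : ∃ p q,
            fV K n hn (Sum.inr ⟨1, hj⟩) = Sum.inl ⟨Sum.inr ⟨tK1 K, p⟩, q⟩ := ⟨_, _, rfl⟩
        rw [hred]
        simp only [fVinv]
        rw [dif_neg (show ¬((tK1 K).val < K) by show ¬(K + 1 < K); omega),
          dif_neg (show ¬((tK1 K).val = K) by show ¬(K + 1 = K); omega)]
      · have h2 : jv = 2 := by have := m_le_three K n; omega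
        subst h2
        obtain ⟨p, q, hred⟩ : ∃ p q,
            fV K n hn (Sum.inr ⟨2, hj⟩) = Sum.inl ⟨Sum.inr ⟨tK K, p⟩, q⟩ := ⟨_, _, rfl⟩
        rw [hred]
        simp only [fVinv]
        rw [dif_neg (lt_irrefl K)]
        exact dif_pos trivial

lemma fV_rightInv : ∀ v, fV K n hn (fVinv K n hn v) = v := by
  rintro (⟨(u | ⟨⟨tv, htv⟩, ht⟩), hne⟩ | ⟨⟩)
  · rfl
  · by_cases h : tv < K
    · simp only [fVinv, fV]
      rw [dif_pos (show tv < K from h)]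
    · by_cases h2 : tv = K
      · simp only [fVinv]
        rw [dif_neg (show ¬((⟨tv, htv⟩ : Fin (K + 2)).val < K) by show ¬(tv < K); omega),
          dif_pos (show (⟨tv, htv⟩ : Fin (K + 2)).val = K from h2)]
        exact congrArg Sum.inl (Subtype.ext (congrArg Sum.inr (Subtype.ext (Fin.ext h2.symm))))
      · have h3 : tv = K + 1 := by omega
        subst h3
        simp only [fVinv]
        rw [dif_neg (show ¬(K + 1 < K) by omega), dif_neg (show ¬(K + 1 = K) by omega)]
        rfl
  · rfl

end FStep
namespace FStep

variable (K : ℕ) (n : Fin (K + 2) → ℕ) (hn : ∀ i, 1 ≤ n i)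

def P : {e : (Fgraph (K + 1) (n' K n)).E // (Fgraph (K + 1) (n' K n)).s e = s0 K n hn} →
    Fin (m K n)
  | ⟨Sum.inl _, _⟩ => ⟨0, by have := two_le_m K n; omega⟩
  | ⟨Sum.inr ⟨t, x⟩, he⟩ =>
      if hx0 : x.val = 0 then ⟨0, by have := two_le_m K n; omega⟩
      else if hxb : x.val ≤ n (tK1 K) then ⟨1, by have := two_le_m K n; omega⟩
      else ⟨2, by
        have ht : t = sK K := congrArg Subtype.val (Sum.inr.inj he)
        have hx : x.val < n (tK K) + n (tK1 K) :=
          lt_of_lt_of_le x.isLt (le_of_eq (by rw [ht]; exact src_top K n))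
        exact (two_lt_m_iff K n).mpr (by omega)⟩

def fE :
    ({e : (Fgraph (K + 1) (n' K n)).E // (Fgraph (K + 1) (n' K n)).r e ≠ s0 K n hn} ⊕
      ({e : (Fgraph (K + 1) (n' K n)).E // (Fgraph (K + 1) (n' K n)).r e = s0 K n hn} ×
        Fin (m K n))) →
    ({e : (Fgraph (K + 2) n).E //
        (Fgraph (K + 2) n).s e ≠ wV K n ∧ (Fgraph (K + 2) n).r e ≠ wV K n} ⊕
      (({e : (Fgraph (K + 2) n).E // (Fgraph (K + 2) n).r e = wV K n} ×
        {f : (Fgraph (K + 2) n).E // (Fgraph (K + 2) n).s f = wV K n}) ⊕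
        {f : (Fgraph (K + 2) n).E // (Fgraph (K + 2) n).s f = wV K n}))
  | Sum.inl ⟨Sum.inl j, _⟩ =>
      Sum.inl ⟨Sum.inl ⟨⟨j.1.val, by have := j.1.isLt; omega⟩, j.2⟩,
        ⟨inl_ne_wV K n (by show j.1.val ≠ K + 1; have := j.1.isLt; omega),
         inl_ne_wV K n (by show j.1.val - 1 ≠ K + 1; have := j.1.isLt; omega)⟩⟩
  | Sum.inl ⟨Sum.inr ⟨t, x⟩, _⟩ =>
      if h : t.val < K then
        Sum.inl ⟨Sum.inr ⟨⟨t.val, by have := t.isLt; omega⟩, ⟨x.val, by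
            have hx : x.val < n ⟨t.val, by have := t.isLt; omega⟩ - 1 :=
              lt_of_lt_of_le x.isLt (le_of_eq (src_lt K n t h))
            rw [src2_lt K n ⟨t.val, by have := t.isLt; omega⟩ (by show t.val < K + 1; omega)]
            exact hx⟩⟩,
          ⟨inr_ne_wV K n, inl_ne_wV K n (by show t.val ≠ K + 1; omega)⟩⟩
      else if hx0 : x.val = 0 then
        Sum.inr (Sum.inr ⟨Sum.inl ⟨tK1 K, by show 0 < K + 1; omega⟩, rfl⟩)
      else if hxb : x.val ≤ n (tK1 K) then
        Sum.inr (Sum.inl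
          (⟨Sum.inr ⟨tK1 K, ⟨x.val - 1, by rw [src2_top]; omega⟩⟩, rfl⟩,
           ⟨Sum.inl ⟨tK1 K, by show 0 < K + 1; omega⟩, rfl⟩))
      else
        Sum.inl ⟨Sum.inr ⟨tK K, ⟨x.val - (n (tK1 K) + 1), by
            rw [src2_lt K n (tK K) (by show K < K + 1; omega)]
            have hx : x.val < n (tK K) + n (tK1 K) :=
              lt_of_lt_of_le x.isLt (le_of_eq (by
                rw [show t = sK K from Fin.ext (by show t.val = K; have := t.isLt; omega)]
                exact src_top K n))
            have := hn (tK K)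
            omega⟩⟩,
          ⟨inr_ne_wV K n, inl_ne_wV K n (by show K ≠ K + 1; omega)⟩⟩
  | Sum.inr ⟨⟨Sum.inl j, he⟩, _⟩ => absurd he (r_ne_s0 K n hn (Sum.inl j))
  | Sum.inr ⟨⟨Sum.inr te, he⟩, _⟩ => absurd he (r_ne_s0 K n hn (Sum.inr te))

def fEinv :
    ({e : (Fgraph (K + 2) n).E //
        (Fgraph (K + 2) n).s e ≠ wV K n ∧ (Fgraph (K + 2) n).r e ≠ wV K n} ⊕
      (({e : (Fgraph (K + 2) n).E // (Fgraph (K + 2) n).r e = wV K n} ×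
        {f : (Fgraph (K + 2) n).E // (Fgraph (K + 2) n).s f = wV K n}) ⊕
        {f : (Fgraph (K + 2) n).E // (Fgraph (K + 2) n).s f = wV K n})) →
    ({e : (Fgraph (K + 1) (n' K n)).E // (Fgraph (K + 1) (n' K n)).r e ≠ s0 K n hn} ⊕
      ({e : (Fgraph (K + 1) (n' K n)).E // (Fgraph (K + 1) (n' K n)).r e = s0 K n hn} ×
        Fin (m K n)))
  | Sum.inl ⟨Sum.inl j, hc⟩ =>
      Sum.inl ⟨Sum.inl ⟨⟨j.1.val, by
          have h1 : j.1.val ≠ K + 1 := fun hv => hc.1 (congrArg Sum.inl (Fin.ext hv))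
          have := j.1.isLt; omega⟩, j.2⟩,
        r_ne_s0 K n hn _⟩
  | Sum.inl ⟨Sum.inr ⟨t, x⟩, hc⟩ =>
      if h : t.val < K then
        Sum.inl ⟨Sum.inr ⟨⟨t.val, by omega⟩, ⟨x.val, by
            have hx : x.val < n t - 1 :=
              lt_of_lt_of_le x.isLt (le_of_eq (src2_lt K n t (by omega)))
            rw [src_lt K n ⟨t.val, by omega⟩ (by show t.val < K; omega)]
            exact hx⟩⟩, r_ne_s0 K n hn _⟩
      else
        Sum.inl ⟨Sum.inr ⟨sK K, ⟨x.val + n (tK1 K) + 1, by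
            rw [src_top]
            have ht : t.val = K := by
              have h2 : t.val ≠ K + 1 := fun hv => hc.2 (congrArg Sum.inl (Fin.ext hv))
              have := t.isLt; omega
            have hx : x.val < n (tK K) - 1 :=
              lt_of_lt_of_le x.isLt (le_of_eq (by
                rw [show t = tK K from Fin.ext ht]
                exact src2_lt K n (tK K) (by show K < K + 1; omega)))
            omega⟩⟩, r_ne_s0 K n hn _⟩
  | Sum.inr (Sum.inl ⟨⟨Sum.inl j, hre⟩, _⟩) =>
      False.elim (by
        have h1 : j.1.val - 1 = K + 1 := congrArg Fin.val (Sum.inl.inj hre)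
        have := j.1.isLt
        omega)
  | Sum.inr (Sum.inl ⟨⟨Sum.inr ⟨t, x⟩, hre⟩, _⟩) =>
      Sum.inl ⟨Sum.inr ⟨sK K, ⟨x.val + 1, by
          rw [src_top]
          have hx : x.val < n (tK1 K) :=
            lt_of_lt_of_le x.isLt (le_of_eq (by
              rw [show t = tK1 K from Sum.inl.inj hre]
              exact src2_top K n))
          have := hn (tK K)
          omega⟩⟩, r_ne_s0 K n hn _⟩
  | Sum.inr (Sum.inr _) =>
      Sum.inl ⟨Sum.inr ⟨sK K, ⟨0, by rw [src_top]; have := hn (tK K); omega⟩⟩,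
        r_ne_s0 K n hn _⟩

end FStep
namespace FStep

variable (K : ℕ) (n : Fin (K + 2) → ℕ) (hn : ∀ i, 1 ≤ n i)

lemma fE_leftInv : ∀ e, fEinv K n hn (fE K n hn e) = e := by
  rintro (⟨(⟨⟨jv, hjv⟩, hj0⟩ | ⟨⟨tv, htv⟩, x⟩), hre⟩ | ⟨⟨e, he⟩, i⟩)
  · rfl
  · by_cases h : tv < K
    · simp only [fE]
      rw [dif_pos (show tv < K from h)]
      simp only [fEinv]
      rw [dif_pos (show tv < K from h)]
    · have hK : K = tv := by omega
      subst hK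
      obtain ⟨xv, hxv⟩ := x
      simp only [fE]
      rw [dif_neg (show ¬(K < K) by omega)]
      by_cases hx0 : xv = 0
      · subst hx0
        rfl
      · rw [dif_neg (show ¬(xv = 0) from hx0)]
        by_cases hxb : xv ≤ n (tK1 K)
        · rw [dif_pos (show xv ≤ n (tK1 K) from hxb)]
          simp only [fEinv]
          exact congrArg Sum.inl (Subtype.ext (congrArg Sum.inr
            (congrArg (Sigma.mk _) (Fin.ext (show xv - 1 + 1 = xv by omega)))))
        · rw [dif_neg (show ¬(xv ≤ n (tK1 K)) from hxb)]
          simp only [fEinv]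
          rw [dif_neg (show ¬((tK K).val < K) by show ¬(K < K); omega)]
          exact congrArg Sum.inl (Subtype.ext (congrArg Sum.inr
            (congrArg (Sigma.mk _)
              (Fin.ext (show xv - (n (tK1 K) + 1) + n (tK1 K) + 1 = xv by omega)))))
  · exact absurd he (r_ne_s0 K n hn e)

lemma fE_rightInv : ∀ e, fE K n hn (fEinv K n hn e) = e := by
  rintro (⟨(⟨⟨jv, hjv⟩, hj0⟩ | ⟨⟨tv, htv⟩, x⟩), hc1, hc2⟩ |
    ((⟨⟨(⟨⟨jv, hjv⟩, hj0⟩ | ⟨⟨tv, htv⟩, x⟩), hre⟩,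
       (⟨⟨j2, hj2⟩, hj20⟩ | ⟨⟨t2, ht2⟩, x2⟩), hf⟩) |
      ⟨(⟨⟨j2, hj2⟩, hj20⟩ | ⟨⟨t2, ht2⟩, x2⟩), hf⟩))
  · rfl
  · by_cases h : tv < K
    · simp only [fEinv]
      rw [dif_pos (show tv < K from h)]
      simp only [fE]
      rw [dif_pos (show tv < K from h)]
    · have h2 : tv ≠ K + 1 := fun hv => hc2 (congrArg Sum.inl (Fin.ext hv))
      have hK : K = tv := by omega
      subst hK
      obtain ⟨xv, hxv⟩ := x
      simp only [fEinv]
      rw [dif_neg (show ¬(K < K) by omega)]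
      simp only [fE]
      rw [dif_neg (show ¬((sK K).val < K) by show ¬(K < K); omega),
        dif_neg (show ¬(xv + n (tK1 K) + 1 = 0) by omega),
        dif_neg (show ¬(xv + n (tK1 K) + 1 ≤ n (tK1 K)) by omega)]
      exact congrArg Sum.inl (Subtype.ext (congrArg Sum.inr
        (congrArg (Sigma.mk _)
          (Fin.ext (show xv + n (tK1 K) + 1 - (n (tK1 K) + 1) = xv by omega)))))
  · exfalso
    have h1 : jv - 1 = K + 1 := congrArg Fin.val (Sum.inl.inj hre)
    omega
  · exfalso
    have h1 : jv - 1 = K + 1 := congrArg Fin.val (Sum.inl.inj hre)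
    omega
  · -- pair edge with source edge into w, paired with line edge out of w
    have ht : K + 1 = tv := (congrArg Fin.val (Sum.inl.inj hre)).symm
    subst ht
    have hj : K + 1 = j2 := (congrArg Fin.val (Sum.inl.inj hf)).symm
    subst hj
    obtain ⟨xv, hxv⟩ := x
    have hxB : xv < n (tK1 K) := lt_of_lt_of_le hxv (le_of_eq (src2_top K n))
    simp only [fEinv, fE]
    rw [dif_neg (show ¬((sK K).val < K) by show ¬(K < K); omega),
      dif_neg (show ¬(xv + 1 = 0) by omega),
      dif_pos (show xv + 1 ≤ n (tK1 K) by omega)]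
    exact congrArg Sum.inr (congrArg Sum.inl (congrArg₂ Prod.mk
      (Subtype.ext (congrArg Sum.inr (congrArg (Sigma.mk _)
        (Fin.ext (show xv + 1 - 1 = xv by omega))))) rfl))
  · exact absurd hf (by simp [Fgraph, wV])
  · -- the tilde edge
    have hj : K + 1 = j2 := (congrArg Fin.val (Sum.inl.inj hf)).symm
    subst hj
    simp only [fEinv, fE]
    rw [dif_neg (show ¬((sK K).val < K) by show ¬(K < K); omega)]
    exact dif_pos trivial
  · exact absurd hf (by simp [Fgraph, wV])

end FStep
namespace FStep

variable (K : ℕ) (n : Fin (K + 2) → ℕ) (hn : ∀ i, 1 ≤ n i)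

lemma O_s_ne (e) (hre : (Fgraph (K + 1) (n' K n)).r e ≠ s0 K n hn)
    (h : (Fgraph (K + 1) (n' K n)).s e ≠ s0 K n hn) :
    (outsplit (Fgraph (K + 1) (n' K n)) (s0 K n hn) (m K n) (P K n hn)).s
      (Sum.inl ⟨e, hre⟩) = Sum.inl ⟨(Fgraph (K + 1) (n' K n)).s e, h⟩ := dif_neg h

lemma O_s_eq (e) (hre : (Fgraph (K + 1) (n' K n)).r e ≠ s0 K n hn)
    (h : (Fgraph (K + 1) (n' K n)).s e = s0 K n hn) :
    (outsplit (Fgraph (K + 1) (n' K n)) (s0 K n hn) (m K n) (P K n hn)).s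
      (Sum.inl ⟨e, hre⟩) = Sum.inr (P K n hn ⟨e, h⟩) := dif_pos h

lemma Z_s_pair (ef) (h : (Fgraph (K + 2) n).s ef.1.1 ≠ wV K n) :
    (reduce (Fgraph (K + 2) n) (wV K n)).s (Sum.inr (Sum.inl ef)) =
      Sum.inl ⟨(Fgraph (K + 2) n).s ef.1.1, h⟩ := dif_neg h

lemma Z_r_pair (ef) (h : (Fgraph (K + 2) n).r ef.2.1 ≠ wV K n) :
    (reduce (Fgraph (K + 2) n) (wV K n)).r (Sum.inr (Sum.inl ef)) =
      Sum.inl ⟨(Fgraph (K + 2) n).r ef.2.1, h⟩ := dif_neg h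

lemma Z_r_tilde (f) (h : (Fgraph (K + 2) n).r f.1 ≠ wV K n) :
    (reduce (Fgraph (K + 2) n) (wV K n)).r (Sum.inr (Sum.inr f)) =
      Sum.inl ⟨(Fgraph (K + 2) n).r f.1, h⟩ := dif_neg h

lemma sComm : ∀ e,
    (reduce (Fgraph (K + 2) n) (wV K n)).s (fE K n hn e) =
      fV K n hn
        ((outsplit (Fgraph (K + 1) (n' K n)) (s0 K n hn) (m K n) (P K n hn)).s e) := by
  rintro (⟨(⟨⟨jv, hjv⟩, hj0⟩ | ⟨⟨tv, htv⟩, x⟩), hre⟩ | ⟨⟨e, he⟩, i⟩)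
  · rw [O_s_ne K n hn (Sum.inl ⟨⟨jv, hjv⟩, hj0⟩) hre (inl_ne_s0 K n hn)]
    rfl
  · by_cases h : tv < K
    · rw [O_s_ne K n hn (Sum.inr ⟨⟨tv, htv⟩, x⟩) hre
        (inr_ne_s0 K n hn (show tv ≠ K by omega))]
      simp only [fE]
      rw [dif_pos (show tv < K from h)]
      rfl
    · have hK : K = tv := by omega
      subst hK
      obtain ⟨xv, hxv⟩ := x
      rw [O_s_eq K n hn (Sum.inr ⟨⟨K, htv⟩, ⟨xv, hxv⟩⟩) hre rfl]
      simp only [fE]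
      rw [dif_neg (show ¬(K < K) by omega)]
      by_cases hx0 : xv = 0
      · subst hx0
        rfl
      · rw [dif_neg (show ¬(xv = 0) from hx0)]
        simp only [P]
        rw [dif_neg (show ¬(xv = 0) from hx0)]
        by_cases hxb : xv ≤ n (tK1 K)
        · rw [dif_pos (show xv ≤ n (tK1 K) from hxb), dif_pos (show xv ≤ n (tK1 K) from hxb)]
          exact (Z_s_pair K n
            (⟨Sum.inr ⟨tK1 K, ⟨xv - 1, by rw [src2_top]; omega⟩⟩, rfl⟩,
             ⟨Sum.inl ⟨tK1 K, by show 0 < K + 1; omega⟩, rfl⟩)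
            (inr_ne_wV K n)).trans rfl
        · rw [dif_neg (show ¬(xv ≤ n (tK1 K)) from hxb), dif_neg (show ¬(xv ≤ n (tK1 K)) from hxb)]
          rfl
  · exact absurd he (r_ne_s0 K n hn e)

lemma rComm : ∀ e,
    (reduce (Fgraph (K + 2) n) (wV K n)).r (fE K n hn e) =
      fV K n hn
        ((outsplit (Fgraph (K + 1) (n' K n)) (s0 K n hn) (m K n) (P K n hn)).r e) := by
  rintro (⟨(⟨⟨jv, hjv⟩, hj0⟩ | ⟨⟨tv, htv⟩, x⟩), hre⟩ | ⟨⟨e, he⟩, i⟩)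
  · rfl
  · by_cases h : tv < K
    · simp only [fE]
      rw [dif_pos (show tv < K from h)]
      rfl
    · have hK : K = tv := by omega
      subst hK
      obtain ⟨xv, hxv⟩ := x
      simp only [fE]
      rw [dif_neg (show ¬(K < K) by omega)]
      by_cases hx0 : xv = 0
      · subst hx0
        exact (Z_r_tilde K n ⟨Sum.inl ⟨tK1 K, by show 0 < K + 1; omega⟩, rfl⟩
          (inl_ne_wV K n (show K + 1 - 1 ≠ K + 1 by omega))).trans rfl
      · rw [dif_neg (show ¬(xv = 0) from hx0)]
        by_cases hxb : xv ≤ n (tK1 K)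
        · rw [dif_pos (show xv ≤ n (tK1 K) from hxb)]
          exact (Z_r_pair K n
            (⟨Sum.inr ⟨tK1 K, ⟨xv - 1, by rw [src2_top]; omega⟩⟩, rfl⟩,
             ⟨Sum.inl ⟨tK1 K, by show 0 < K + 1; omega⟩, rfl⟩)
            (inl_ne_wV K n (show K + 1 - 1 ≠ K + 1 by omega))).trans rfl
        · rw [dif_neg (show ¬(xv ≤ n (tK1 K)) from hxb)]
          rfl
  · exact absurd he (r_ne_s0 K n hn e)

theorem iso_main :
    Iso (outsplit (Fgraph (K + 1) (n' K n)) (s0 K n hn) (m K n) (P K n hn))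
      (reduce (Fgraph (K + 2) n) (wV K n)) :=
  ⟨⟨fV K n hn, fVinv K n hn, fV_leftInv K n hn, fV_rightInv K n hn⟩,
   ⟨fE K n hn, fEinv K n hn, fE_leftInv K n hn, fE_rightInv K n hn⟩,
   sComm K n hn, rComm K n hn⟩

end FStep
lemma CKGraph.iso_refl (G : CKGraph) : Iso G G :=
  ⟨Equiv.refl _, Equiv.refl _, fun _ => rfl, fun _ => rfl⟩

namespace FStep

variable (K : ℕ) (n : Fin (K + 2) → ℕ)

lemma moveRp_step :
    MoveRp (Fgraph (K + 2) n) (reduce (Fgraph (K + 2) n) (wV K n)) := by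
  refine ⟨wV K n,
    ⟨⟨⟨Sum.inl ⟨tK1 K, by show 0 < K + 1; omega⟩, rfl⟩⟩, ?_⟩, ?_, CKGraph.iso_refl _⟩
  · haveI : Finite (Fgraph (K + 2) n).E := by
      show Finite ({j : Fin (K + 2) // 0 < j.val} ⊕
        ((t : Fin (K + 2)) × Fin (srcCount (K + 2) n t)))
      infer_instance
    exact Subtype.finite
  · rintro (⟨⟨jv, hjv⟩, hj0⟩ | ⟨t, x⟩) ⟨h1, h2⟩
    · have e1 : jv = K + 1 := congrArg Fin.val (Sum.inl.inj h1)
      have e2 : jv - 1 = K + 1 := congrArg Fin.val (Sum.inl.inj h2)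
      omega
    · exact inr_ne_wV K n h1

lemma moveO_step (hn : ∀ i, 1 ≤ n i) :
    MoveO (Fgraph (K + 1) (n' K n)) (reduce (Fgraph (K + 2) n) (wV K n)) := by
  refine ⟨s0 K n hn, m K n, P K n hn,
    ⟨⟨Sum.inr ⟨sK K, ⟨0, by rw [src_top]; have := hn (tK K); omega⟩⟩, rfl⟩⟩,
    ?_, ?_, iso_main K n hn⟩
  · intro i
    obtain ⟨iv, hiv⟩ := i
    have hA := hn (tK K)
    have hB := hn (tK1 K)
    have h3 := m_le_three K n
    have hlt : iv < 3 := by omega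
    interval_cases iv
    · exact ⟨⟨Sum.inr ⟨sK K, ⟨0, by rw [src_top]; omega⟩⟩, rfl⟩, rfl⟩
    · refine ⟨⟨Sum.inr ⟨sK K, ⟨1, by rw [src_top]; omega⟩⟩, rfl⟩, ?_⟩
      simp only [P]
      rw [dif_neg (show ¬((1:ℕ) = 0) by omega), dif_pos (show (1:ℕ) ≤ n (tK1 K) from hB)]
    · have hA2 : n (tK K) ≠ 1 := (two_lt_m_iff K n).mp hiv
      refine ⟨⟨Sum.inr ⟨sK K, ⟨n (tK1 K) + 1, by rw [src_top]; omega⟩⟩, rfl⟩, ?_⟩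
      simp only [P]
      rw [dif_neg (show ¬(n (tK1 K) + 1 = 0) by omega),
        dif_neg (show ¬(n (tK1 K) + 1 ≤ n (tK1 K)) by omega)]
  · intro i j hi _
    exfalso
    haveI : Finite (Fgraph (K + 1) (n' K n)).E := by
      show Finite ({j : Fin (K + 1) // 0 < j.val} ⊕
        ((t : Fin (K + 1)) × Fin (srcCount (K + 1) (n' K n) t)))
      infer_instance
    haveI : Finite {e : (Fgraph (K + 1) (n' K n)).E //
        (Fgraph (K + 1) (n' K n)).s e = s0 K n hn} := Subtype.finite
    exact (Set.toFinite _).not_infinite hi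

end FStep

theorem FStep.main_aux : ∀ K : ℕ, ∀ n : Fin (K + 1) → ℕ, (∀ i, 1 ≤ n i) →
    MoveEquiv (fun A B => MoveO A B ∨ MoveRp A B)
      (Fgraph (K + 1) n) (Fgraph 1 (fun _ => ∑ i, n i)) := by
  intro K
  induction K with
  | zero =>
      intro n hn
      have hEq : (fun _ : Fin 1 => ∑ i, n i) = n := by
        funext j
        rw [Fin.sum_univ_one, Subsingleton.elim j 0]
      rw [hEq]
      exact ⟨Fgraph 1 n, Relation.ReflTransGen.refl, CKGraph.iso_refl _⟩
  | succ K ih =>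
      intro n hn
      have hn' : ∀ i, 1 ≤ FStep.n' K n i := by
        intro i
        unfold FStep.n'
        split
        · have := hn (FStep.tK K); omega
        · exact hn _
      obtain ⟨Kf, chain, isoK⟩ := ih (FStep.n' K n) hn'
      refine ⟨Kf, ?_, ?_⟩
      · exact Relation.ReflTransGen.head (Or.inl (Or.inr (FStep.moveRp_step K n)))
          (Relation.ReflTransGen.head (Or.inr (Or.inl (FStep.moveO_step K n hn))) chain)
      · rwa [show (fun _ : Fin 1 => ∑ i, FStep.n' K n i) = (fun _ : Fin 1 => ∑ i, n i) from
          funext fun _ => FStep.sum_n' K n] at isoK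

/-- For `k ≥ 1` and `n₁, …, n_k ≥ 1`, the graph `F(n₁,…,n_k)` is
move equivalent via the moves (O) and (R+) to the graph `F(n₁ + ⋯ + n_k)`. -/
theorem Fgraph_moveEquiv_O_Rplus (k : ℕ) (hk : 1 ≤ k) (n : Fin k → ℕ)
    (hn : ∀ i, 1 ≤ n i) :
    MoveEquiv (fun A B => MoveO A B ∨ MoveRp A B)
      (Fgraph k n) (Fgraph 1 (fun _ => ∑ i, n i)) := by
  obtain ⟨K, rfl⟩ : ∃ K, k = K + 1 := ⟨k - 1, by omega⟩
  exact FStep.main_aux K n hn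
end

section
/- For every k ≥ 1 and all integers n₁, …, n_k ≥ 1, the graph F(n₁,…,n_k) is move equivalent via the moves (O) and (I-) to the graph F(1,1,…,1) with k entries equal to 1 (a path of length k ending in a sink). -/
open Classical

open CKGraph

/-!
Every entry `n t ≥ 2` can be reset to `1` by a move (O) followed by the inverse of a move (I-).
Outsplitting the source above `u_t` into one source per edge yields the same graph as insplitting
`F(…, 1, …)` (the entry at `t` replaced by `1`) at `u_{t+1}` with all incoming edges kept by one
copy, since every other copy is then a source emitting a single edge to `u_t`; for the last entry
one insplits instead the one-edge source above `u_{k-1}`. Resetting the entries one at a time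
reaches `F(1, …, 1)`.
-/

namespace CKGraph

theorem Iso.refl (G : CKGraph) : Iso G G :=
  ⟨Equiv.refl _, Equiv.refl _, fun _ => rfl, fun _ => rfl⟩

theorem MoveO.of_iso_outsplit {G H : CKGraph} {w : G.V} {m : ℕ}
    {P : {e : G.E // G.s e = w} → Fin m} [Finite {e : G.E // G.s e = w}]
    (hw : Nonempty {e : G.E // G.s e = w}) (hP : Function.Surjective P)
    (h : Iso (G.outsplit w m P) H) : MoveO G H :=
  ⟨w, m, P, hw, hP, fun _ _ hi _ => absurd hi (Set.toFinite _).not_infinite, h⟩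

theorem MoveIm.insplit {G : CKGraph} {w : G.V} {m : ℕ} (P : {e : G.E // G.r e = w} → Fin m)
    (hw : G.Regular w) (hm : 1 ≤ m) : MoveIm G (G.insplit w m P) :=
  ⟨w, m, P, hw, hm, Iso.refl _⟩

end CKGraph

open Relation Function

theorem Relation.ReflTransGen.symmGen_of_rel_of_rel {α : Type*} {r : α → α → Prop} {a b c : α}
    (hac : r a c) (hbc : r b c) : ReflTransGen (SymmGen r) a b :=
  ReflTransGen.tail (r := SymmGen r) (.single (Or.inl hac)) (Or.inr hbc)

theorem Relation.ReflTransGen.to_const_one {ι α : Type*} [Fintype ι] [DecidableEq ι]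
    {r : α → α → Prop} (F : (ι → ℕ) → α)
    (step : ∀ n t, 2 ≤ n t → ReflTransGen r (F n) (F (update n t 1)))
    (n : ι → ℕ) (hn : ∀ i, 1 ≤ n i) : ReflTransGen r (F n) (F fun _ => 1) := by
  suffices ∀ S : Finset ι, ReflTransGen r (F n) (F (S.piecewise (fun _ => 1) n)) by
    simpa [Finset.piecewise] using this Finset.univ
  intro S
  induction S using Finset.induction_on with
  | empty => rw [Finset.piecewise_empty]
  | insert a S ha ih =>
    rw [Finset.piecewise_insert]
    obtain h | h : n a = 1 ∨ 2 ≤ n a := by have := hn a; omega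
    · rwa [update_eq_self_iff.mpr (by rw [Finset.piecewise_eq_of_notMem S _ _ ha, h])]
    · exact ih.trans (step _ a (by rwa [Finset.piecewise_eq_of_notMem S _ _ ha]))

section Fgraph

variable {k : ℕ} (n : Fin k → ℕ) (t : Fin k)

theorem srcCount_update_of_ne {t' : Fin k} (h : t' ≠ t) :
    srcCount k (update n t 1) t' = srcCount k n t' := by
  simp [srcCount, h]

theorem srcCount_update_self_of_lt (h : t.val + 1 < k) : srcCount k (update n t 1) t = 0 := by
  simp [srcCount, h]

theorem srcCount_update_self_of_not_lt (h : ¬ t.val + 1 < k) :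
    srcCount k (update n t 1) t = 1 := by
  simp [srcCount, h]

theorem srcCount_pos_of_two_le (h : 2 ≤ n t) : 0 < srcCount k n t := by
  unfold srcCount; split_ifs <;> omega

instance : Finite (Fgraph k n).E :=
  inferInstanceAs (Finite ({j : Fin k // 0 < j.val} ⊕ ((t : Fin k) × Fin (srcCount k n t))))

theorem Fgraph_isSource_inr (v : {t : Fin k // 0 < srcCount k n t}) :
    (Fgraph k n).IsSource (Sum.inr v) := by
  rintro (_ | _) <;> exact Sum.inl_ne_inr

variable {n t} (hc : 0 < srcCount k n t)

def sourceEdgeIndex :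
    {e : (Fgraph k n).E // (Fgraph k n).s e = Sum.inr ⟨t, hc⟩} → Fin (srcCount k n t)
  | ⟨Sum.inl _, h⟩ => absurd h Sum.inl_ne_inr
  | ⟨Sum.inr te, h⟩ =>
      Fin.cast (congrArg (srcCount k n) (congrArg Subtype.val (Sum.inr.inj h))) te.2

theorem sourceEdgeIndex_surjective : Surjective (sourceEdgeIndex hc) :=
  fun i => ⟨⟨Sum.inr ⟨t, i⟩, rfl⟩, rfl⟩

/-- `F(n)` with the source above `u_t` split into one source per edge. -/
noncomputable abbrev sourceSplit : CKGraph :=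
  (Fgraph k n).outsplit (Sum.inr ⟨t, hc⟩) (srcCount k n t) (sourceEdgeIndex hc)

theorem moveO_of_iso_sourceSplit {H : CKGraph} (h : Iso (sourceSplit hc) H) :
    MoveO (Fgraph k n) H :=
  MoveO.of_iso_outsplit ⟨⟨Sum.inr ⟨t, ⟨0, hc⟩⟩, rfl⟩⟩ (sourceEdgeIndex_surjective hc) h

section LtCase

variable (h1 : t.val + 1 < k)

include h1 in
theorem ne_of_srcCount_update_pos {t' : Fin k} (h : 0 < srcCount k (update n t 1) t') :
    t' ≠ t := by
  rintro rfl
  rw [srcCount_update_self_of_lt n t' h1] at h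
  exact h.false

/-- All incoming edges of `u_{t+1}` go to the first copy, so the other `srcCount k n t` copies
are sources emitting one edge to `u_t`. -/
noncomputable abbrev insplitSucc (n : Fin k → ℕ) : CKGraph :=
  (Fgraph k (update n t 1)).insplit (Sum.inl ⟨t.val + 1, h1⟩) (srcCount k n t + 1) (fun _ => 0)

noncomputable def sourceSplitVertexEquivOfLt : (sourceSplit hc).V ≃ (insplitSucc h1 n).V where
  toFun
  | Sum.inl ⟨Sum.inl j, _⟩ =>
      if hj : j = ⟨t.val + 1, h1⟩ then Sum.inr 0
      else Sum.inl ⟨Sum.inl j, fun h => hj (Sum.inl.inj h)⟩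
  | Sum.inl ⟨Sum.inr ⟨t', h'⟩, hne⟩ =>
      have ht' : t' ≠ t := fun h => hne (by subst h; rfl)
      Sum.inl ⟨Sum.inr ⟨t', (srcCount_update_of_ne n t ht').symm ▸ h'⟩, Sum.inr_ne_inl⟩
  | Sum.inr j => Sum.inr j.succ
  invFun
  | Sum.inl ⟨Sum.inl j, _⟩ => Sum.inl ⟨Sum.inl j, Sum.inl_ne_inr⟩
  | Sum.inl ⟨Sum.inr ⟨t', h'⟩, _⟩ =>
      have ht' := ne_of_srcCount_update_pos h1 h'
      Sum.inl ⟨Sum.inr ⟨t', srcCount_update_of_ne n t ht' ▸ h'⟩,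
        fun h => ht' (congrArg Subtype.val (Sum.inr.inj h))⟩
  | Sum.inr i => Fin.cases (Sum.inl ⟨Sum.inl ⟨t.val + 1, h1⟩, Sum.inl_ne_inr⟩) Sum.inr i
  left_inv := by
    rintro (⟨(j | ⟨t', h'⟩), hne⟩ | j)
    · by_cases hj : j = ⟨t.val + 1, h1⟩
      · subst hj; simp only [↓reduceDIte]; rfl
      · simp only [hj, ↓reduceDIte]; rfl
    · rfl
    · rfl
  right_inv := by
    rintro (⟨(j | ⟨t', h'⟩), hne⟩ | i)
    · have hj : j ≠ ⟨t.val + 1, h1⟩ := fun h => hne (congrArg Sum.inl h)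
      simp only [hj, ↓reduceDIte]; rfl
    · rfl
    · induction i using Fin.cases
      · exact dif_pos rfl
      · rfl

noncomputable def sourceSplitEdgeEquivOfLt : (sourceSplit hc).E ≃ (insplitSucc h1 n).E where
  toFun
  | Sum.inl ⟨Sum.inl j, _⟩ =>
      if hj : j.1 = ⟨t.val + 1, h1⟩ then Sum.inr (⟨Sum.inl j, congrArg Sum.inl hj⟩, 0)
      else Sum.inl ⟨Sum.inl j, fun h => hj (Sum.inl.inj h)⟩
  | Sum.inl ⟨Sum.inr ⟨t', i⟩, _⟩ =>
      if ht' : t' = t then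
        Sum.inr (⟨Sum.inl ⟨⟨t.val + 1, h1⟩, Nat.succ_pos _⟩, rfl⟩,
          (Fin.cast (by rw [ht']) i).succ)
      else
        Sum.inl ⟨Sum.inr ⟨t', Fin.cast (srcCount_update_of_ne n t ht').symm i⟩, Sum.inr_ne_inl⟩
  | Sum.inr (⟨e, he⟩, _) => absurd he (Fgraph_isSource_inr n _ e)
  invFun
  | Sum.inl ⟨Sum.inl j, _⟩ => Sum.inl ⟨Sum.inl j, Sum.inl_ne_inr⟩
  | Sum.inl ⟨Sum.inr ⟨t', i⟩, _⟩ =>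
      have ht' := ne_of_srcCount_update_pos h1 i.pos
      Sum.inl ⟨Sum.inr ⟨t', Fin.cast (srcCount_update_of_ne n t ht') i⟩, Sum.inl_ne_inr⟩
  | Sum.inr (⟨Sum.inl j, _⟩, i) =>
      Fin.cases (Sum.inl ⟨Sum.inl j, Sum.inl_ne_inr⟩)
        (fun i' => Sum.inl ⟨Sum.inr ⟨t, i'⟩, Sum.inl_ne_inr⟩) i
  | Sum.inr (⟨Sum.inr _, hs⟩, _) => absurd hs Sum.inr_ne_inl
  left_inv := by
    rintro (⟨(j | ⟨t', i⟩), hne⟩ | ⟨⟨e, he⟩, i⟩)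
    · by_cases hj : j.1 = ⟨t.val + 1, h1⟩ <;> simp only [hj, ↓reduceDIte] <;> rfl
    · by_cases ht' : t' = t
      · subst ht'; simp only [↓reduceDIte, Fin.cast_eq_self]; rfl
      · simp only [ht', ↓reduceDIte, Fin.cast_cast, Fin.cast_eq_self]; rfl
    · exact absurd he (Fgraph_isSource_inr n _ e)
  right_inv := by
    rintro (⟨(j | ⟨t', i⟩), hs⟩ | ⟨⟨(⟨j, hj⟩ | te), hs⟩, i⟩)
    · have hj : j.1 ≠ ⟨t.val + 1, h1⟩ := fun h => hs (congrArg Sum.inl h)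
      simp only [hj, ↓reduceDIte]; rfl
    · simp only [ne_of_srcCount_update_pos h1 i.pos, ↓reduceDIte, Fin.cast_cast, Fin.cast_eq_self]
      rfl
    · obtain rfl : j = ⟨t.val + 1, h1⟩ := Sum.inl.inj hs
      induction i using Fin.cases <;> exact dif_pos rfl
    · exact absurd hs Sum.inr_ne_inl

theorem sourceSplit_iso_insplitSucc : Iso (sourceSplit hc) (insplitSucc h1 n) := by
  refine ⟨sourceSplitVertexEquivOfLt hc h1, sourceSplitEdgeEquivOfLt hc h1, ?_, ?_⟩ <;>
    simp only [sourceSplitVertexEquivOfLt, sourceSplitEdgeEquivOfLt, Equiv.coe_fn_mk] <;>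
    rintro (⟨(j | ⟨t', i⟩), -⟩ | ⟨⟨e, he⟩, i⟩)
  all_goals first
    | exact absurd he (Fgraph_isSource_inr n _ e)
    | simp only [sourceSplit, insplitSucc, outsplit, insplit, Fgraph, ne_eq, Sum.elim_inl,
        Sum.elim_inr, reduceCtorEq, Sum.inr.injEq, Subtype.mk.injEq, Fin.mk.injEq,
        Nat.pred_eq_succ_iff, ↓reduceDIte]
      split_ifs <;> simp_all [Fin.ext_iff, sourceEdgeIndex]

end LtCase

section LastCase

variable (h1 : ¬ t.val + 1 < k)

include h1 in
theorem srcCount_update_self_pos_of_not_lt : 0 < srcCount k (update n t 1) t := by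
  rw [srcCount_update_self_of_not_lt n t h1]
  exact one_pos

/-- The source above `u_t` receives no edges, so the partition `fun _ => ⟨0, hc⟩` is empty. -/
noncomputable abbrev insplitLastSource : CKGraph :=
  (Fgraph k (update n t 1)).insplit (Sum.inr ⟨t, srcCount_update_self_pos_of_not_lt h1⟩)
    (srcCount k n t) (fun _ => ⟨0, hc⟩)

noncomputable def sourceSplitVertexEquivOfLast :
    (sourceSplit hc).V ≃ (insplitLastSource hc h1).V where
  toFun
  | Sum.inl ⟨Sum.inl j, _⟩ => Sum.inl ⟨Sum.inl j, Sum.inl_ne_inr⟩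
  | Sum.inl ⟨Sum.inr ⟨t', h'⟩, hne⟩ =>
      have ht' : t' ≠ t := fun h => hne (by subst h; rfl)
      Sum.inl ⟨Sum.inr ⟨t', (srcCount_update_of_ne n t ht').symm ▸ h'⟩,
        fun h => ht' (congrArg Subtype.val (Sum.inr.inj h))⟩
  | Sum.inr j => Sum.inr j
  invFun
  | Sum.inl ⟨Sum.inl j, _⟩ => Sum.inl ⟨Sum.inl j, Sum.inl_ne_inr⟩
  | Sum.inl ⟨Sum.inr ⟨t', h'⟩, hne⟩ =>
      have ht' : t' ≠ t := fun h => hne (by subst h; rfl)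
      Sum.inl ⟨Sum.inr ⟨t', srcCount_update_of_ne n t ht' ▸ h'⟩,
        fun h => ht' (congrArg Subtype.val (Sum.inr.inj h))⟩
  | Sum.inr j => Sum.inr j
  left_inv := by
    rintro (⟨(j | ⟨t', h'⟩), hne⟩ | j) <;> rfl
  right_inv := by
    rintro (⟨(j | ⟨t', h'⟩), hne⟩ | j) <;> rfl

noncomputable def sourceSplitEdgeEquivOfLast :
    (sourceSplit hc).E ≃ (insplitLastSource hc h1).E where
  toFun
  | Sum.inl ⟨Sum.inl j, _⟩ => Sum.inl ⟨Sum.inl j, Sum.inl_ne_inr⟩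
  | Sum.inl ⟨Sum.inr ⟨t', i⟩, _⟩ =>
      if ht' : t' = t then
        Sum.inr (⟨Sum.inr ⟨t, ⟨0, srcCount_update_self_pos_of_not_lt h1⟩⟩, rfl⟩,
          Fin.cast (by rw [ht']) i)
      else Sum.inl ⟨Sum.inr ⟨t', Fin.cast (srcCount_update_of_ne n t ht').symm i⟩,
        fun h => ht' (congrArg Subtype.val (Sum.inr.inj h))⟩
  | Sum.inr (⟨e, he⟩, _) => absurd he (Fgraph_isSource_inr n _ e)
  invFun
  | Sum.inl ⟨Sum.inl j, _⟩ => Sum.inl ⟨Sum.inl j, Sum.inl_ne_inr⟩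
  | Sum.inl ⟨Sum.inr ⟨t', i⟩, hs⟩ =>
      have ht' : t' ≠ t := fun h => hs (by subst h; rfl)
      Sum.inl ⟨Sum.inr ⟨t', Fin.cast (srcCount_update_of_ne n t ht') i⟩, Sum.inl_ne_inr⟩
  | Sum.inr (⟨Sum.inl _, hs⟩, _) => absurd hs Sum.inl_ne_inr
  | Sum.inr (⟨Sum.inr _, _⟩, i) => Sum.inl ⟨Sum.inr ⟨t, i⟩, Sum.inl_ne_inr⟩
  left_inv := by
    rintro (⟨(j | ⟨t', i⟩), hne⟩ | ⟨⟨e, he⟩, i⟩)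
    · rfl
    · by_cases ht' : t' = t
      · subst ht'; simp only [↓reduceDIte, Fin.cast_eq_self]; rfl
      · simp only [ht', ↓reduceDIte, Fin.cast_cast, Fin.cast_eq_self]; rfl
    · exact absurd he (Fgraph_isSource_inr n _ e)
  right_inv := by
    rintro (⟨(j | ⟨t', i⟩), hs⟩ | ⟨⟨(j | ⟨t2, ⟨iv, hlt⟩⟩), hs⟩, i⟩)
    · rfl
    · have ht' : t' ≠ t := fun h => hs (by subst h; rfl)
      simp only [ht', ↓reduceDIte, Fin.cast_cast, Fin.cast_eq_self]; rfl
    · exact absurd hs Sum.inl_ne_inr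
    · obtain rfl : t2 = t := congrArg Subtype.val (Sum.inr.inj hs)
      obtain rfl : iv = 0 := by rw [srcCount_update_self_of_not_lt n t2 h1] at hlt; omega
      exact dif_pos rfl

theorem sourceSplit_iso_insplitLastSource : Iso (sourceSplit hc) (insplitLastSource hc h1) := by
  refine ⟨sourceSplitVertexEquivOfLast hc h1, sourceSplitEdgeEquivOfLast hc h1, ?_, ?_⟩ <;>
    simp only [sourceSplitVertexEquivOfLast, sourceSplitEdgeEquivOfLast, Equiv.coe_fn_mk] <;>
    rintro (⟨(j | ⟨t', i⟩), -⟩ | ⟨⟨e, he⟩, i⟩)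
  all_goals first
    | exact absurd he (Fgraph_isSource_inr n _ e)
    | simp only [sourceSplit, insplitLastSource, outsplit, insplit, Fgraph, ne_eq, Sum.elim_inl,
        Sum.elim_inr, reduceCtorEq, Sum.inr.injEq, Subtype.mk.injEq, ↓reduceDIte] <;>
      split_ifs <;> simp_all [sourceEdgeIndex]

end LastCase

end Fgraph

theorem Fgraph_reflTransGen_update {k : ℕ} {n : Fin k → ℕ} {t : Fin k} (h2 : 2 ≤ n t) :
    ReflTransGen (SymmGen fun A B => MoveO A B ∨ MoveIm A B)
      (Fgraph k n) (Fgraph k (update n t 1)) := by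
  have hc := srcCount_pos_of_two_le n t h2
  by_cases h1 : t.val + 1 < k
  · refine .symmGen_of_rel_of_rel (c := insplitSucc h1 n) (.inl ?_) (.inr ?_)
    · exact moveO_of_iso_sourceSplit hc (sourceSplit_iso_insplitSucc hc h1)
    · exact MoveIm.insplit _
        ⟨⟨⟨Sum.inl ⟨⟨t.val + 1, h1⟩, Nat.succ_pos _⟩, rfl⟩⟩, inferInstance⟩ (Nat.le_add_left 1 _)
  · refine .symmGen_of_rel_of_rel (c := insplitLastSource hc h1) (.inl ?_) (.inr ?_)
    · exact moveO_of_iso_sourceSplit hc (sourceSplit_iso_insplitLastSource hc h1)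
    · exact MoveIm.insplit _
        ⟨⟨⟨Sum.inr ⟨t, ⟨0, srcCount_update_self_pos_of_not_lt h1⟩⟩, rfl⟩⟩, inferInstance⟩ hc

theorem Fgraph_moveEquiv_O_Iminus_general (k : ℕ) (n : Fin k → ℕ)
    (hn : ∀ i, 1 ≤ n i) :
    MoveEquiv (fun A B => MoveO A B ∨ MoveIm A B)
      (Fgraph k n) (Fgraph k (fun _ => 1)) :=
  ⟨_, ReflTransGen.to_const_one (Fgraph k) (fun _ _ => Fgraph_reflTransGen_update) n hn,
    Iso.refl _⟩

/-- For `k ≥ 1` and `n₁, …, n_k ≥ 1`, the graph `F(n₁,…,n_k)` is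
move equivalent via the moves (O) and (I-) to the graph `F(1,1,…,1)` with `k`
entries equal to `1`. -/
theorem Fgraph_moveEquiv_O_Iminus (k : ℕ) (hk : 1 ≤ k) (n : Fin k → ℕ)
    (hn : ∀ i, 1 ≤ n i) :
    MoveEquiv (fun A B => MoveO A B ∨ MoveIm A B)
      (Fgraph k n) (Fgraph k (fun _ => 1)) :=
  Fgraph_moveEquiv_O_Iminus_general k n hn
end

section
/- For every k ≥ 1 and all integers n₁, …, n_k ≥ 0, the graph E(n₁,…,n_k) is move equivalent via the moves (O) and (R+) to the graph E(N) with a single cycle vertex, where N = (n₁+1) + (n₂+1) + ⋯ + (n_k+1) − 1. -/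
open Classical

open CKGraph

namespace EMoveAux

open CKGraph

lemma isoRefl (G : CKGraph) : Iso G G :=
  ⟨Equiv.refl _, Equiv.refl _, fun _ => rfl, fun _ => rfl⟩

/-- Multiplicities after collapsing the last cycle vertex. -/
def nstep {k : ℕ} (n : Fin (k + 1) → ℕ) (i : Fin k) : ℕ :=
  if i.val = 0 then n 0 + n (Fin.last k) + 1
  else n ⟨i.val, Nat.lt_succ_of_lt i.isLt⟩

section

variable {m : ℕ}

lemma nstep_zero (n : Fin (m + 2) → ℕ) :
    nstep n (0 : Fin (m + 1)) = n 0 + n (Fin.last (m + 1)) + 1 := by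
  simp [nstep]

lemma nstep_ne (n : Fin (m + 2) → ℕ) (i : Fin (m + 1)) (h : i.val ≠ 0) :
    nstep n i = n ⟨i.val, Nat.lt_succ_of_lt i.isLt⟩ := by
  simp [nstep, h]

lemma nstep_sum (n : Fin (m + 2) → ℕ) :
    (∑ i : Fin (m + 1), (nstep n i + 1)) = ∑ i : Fin (m + 2), (n i + 1) := by
  rw [Fin.sum_univ_succ (f := fun i : Fin (m + 1) => nstep n i + 1)]
  rw [Fin.sum_univ_castSucc (f := fun i : Fin (m + 2) => n i + 1)]
  rw [Fin.sum_univ_succ (f := fun i : Fin (m + 1) => n i.castSucc + 1)]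
  have hterm : ∀ i : Fin m, nstep n i.succ + 1 = n i.succ.castSucc + 1 := by
    intro i
    rw [nstep_ne n i.succ (by simp)]
    exact congrArg (· + 1) (congrArg n (Fin.ext rfl))
  rw [Finset.sum_congr rfl (fun i _ => hterm i), nstep_zero, Fin.castSucc_zero]
  omega

@[simp] lemma Egraph_s_inl {k : ℕ} (nn : Fin k → ℕ) (j : Fin k) :
    (Egraph k nn).s (Sum.inl j) = Sum.inl j := rfl

@[simp] lemma Egraph_r_inl {k : ℕ} (nn : Fin k → ℕ) (j : Fin k) :
    (Egraph k nn).r (Sum.inl j) =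
      Sum.inl (⟨(j.val + 1) % k, Nat.mod_lt _ j.pos⟩ : Fin k) := rfl

@[simp] lemma Egraph_s_inr {k : ℕ} (nn : Fin k → ℕ) (p : Σ i : Fin k, Fin (nn i)) :
    (Egraph k nn).s (Sum.inr p) = Sum.inr ⟨(), ⟨p.1, p.2.pos⟩⟩ := rfl

@[simp] lemma Egraph_r_inr {k : ℕ} (nn : Fin k → ℕ) (p : Σ i : Fin k, Fin (nn i)) :
    (Egraph k nn).r (Sum.inr p) = Sum.inl p.1 := rfl

@[simp] lemma reduce_s_inl (G : CKGraph) (w : G.V)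
    (e : {e : G.E // G.s e ≠ w ∧ G.r e ≠ w}) :
    (G.reduce w).s (Sum.inl e) = Sum.inl ⟨G.s e.1, e.2.1⟩ := rfl

@[simp] lemma reduce_r_inl (G : CKGraph) (w : G.V)
    (e : {e : G.E // G.s e ≠ w ∧ G.r e ≠ w}) :
    (G.reduce w).r (Sum.inl e) = Sum.inl ⟨G.r e.1, e.2.2⟩ := rfl

@[simp] lemma reduce_s_pair (G : CKGraph) (w : G.V)
    (ef : {e : G.E // G.r e = w} × {f : G.E // G.s f = w}) :
    (G.reduce w).s (Sum.inr (Sum.inl ef)) =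
      if h : G.s ef.1.1 = w then Sum.inr () else Sum.inl ⟨G.s ef.1.1, h⟩ := rfl

@[simp] lemma reduce_r_pair (G : CKGraph) (w : G.V)
    (ef : {e : G.E // G.r e = w} × {f : G.E // G.s f = w}) :
    (G.reduce w).r (Sum.inr (Sum.inl ef)) =
      if h : G.r ef.2.1 = w then Sum.inr () else Sum.inl ⟨G.r ef.2.1, h⟩ := rfl

@[simp] lemma reduce_s_tail (G : CKGraph) (w : G.V) (f : {f : G.E // G.s f = w}) :
    (G.reduce w).s (Sum.inr (Sum.inr f)) = Sum.inr () := rfl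

@[simp] lemma reduce_r_tail (G : CKGraph) (w : G.V) (f : {f : G.E // G.s f = w}) :
    (G.reduce w).r (Sum.inr (Sum.inr f)) =
      if h : G.r f.1 = w then Sum.inr () else Sum.inl ⟨G.r f.1, h⟩ := rfl

@[simp] lemma outsplit_s_inl (G : CKGraph) (w : G.V) (N : ℕ)
    (P : {e : G.E // G.s e = w} → Fin N) (e : {e : G.E // G.r e ≠ w}) :
    (G.outsplit w N P).s (Sum.inl e) =
      if h : G.s e.1 = w then Sum.inr (P ⟨e.1, h⟩) else Sum.inl ⟨G.s e.1, h⟩ := rfl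

@[simp] lemma outsplit_r_inl (G : CKGraph) (w : G.V) (N : ℕ)
    (P : {e : G.E // G.s e = w} → Fin N) (e : {e : G.E // G.r e ≠ w}) :
    (G.outsplit w N P).r (Sum.inl e) = Sum.inl ⟨G.r e.1, e.2⟩ := rfl

/-- The source vertex of the collapsed graph. -/
def uS (n : Fin (m + 2) → ℕ) : (Egraph (m + 1) (nstep n)).V :=
  Sum.inr ⟨(), ⟨0, by rw [nstep_zero]; omega⟩⟩

lemma r_ne_uS (n : Fin (m + 2) → ℕ) (e : (Egraph (m + 1) (nstep n)).E) :
    (Egraph (m + 1) (nstep n)).r e ≠ uS n := by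
  cases e <;> simp [uS] <;> exact Sum.inl_ne_inr

lemma s_src (n : Fin (m + 2) → ℕ) (p : Σ i : Fin (m + 1), Fin (nstep n i)) :
    (Egraph (m + 1) (nstep n)).s (Sum.inr p) = uS n := rfl

/-- The canonical edge emitted by the collapsed vertex. -/
def cE (n : Fin (m + 2) → ℕ) :
    {f : (Egraph (m + 2) n).E // (Egraph (m + 2) n).s f = Sum.inl (Fin.last (m + 1))} :=
  ⟨Sum.inl (Fin.last (m + 1)), rfl⟩

lemma cE_unique (n : Fin (m + 2) → ℕ)
    (c : {f : (Egraph (m + 2) n).E // (Egraph (m + 2) n).s f = Sum.inl (Fin.last (m + 1))}) :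
    c = cE n := by
  rcases c with ⟨e, he⟩
  apply Subtype.ext
  cases e with
  | inl j =>
    rw [Egraph_s_inl] at he
    injection he with hj
    subst hj; rfl
  | inr p => exact absurd he (by simp)

end

end EMoveAux

namespace EMoveAux

open CKGraph

section

variable {m : ℕ}

lemma finE {k : ℕ} (nn : Fin k → ℕ) : Finite (Egraph k nn).E :=
  show Finite (Fin k ⊕ Σ i : Fin k, Fin (nn i)) from inferInstance

lemma reg_w (n : Fin (m + 2) → ℕ) :
    (Egraph (m + 2) n).Regular (Sum.inl (Fin.last (m + 1))) := by
  constructor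
  · exact ⟨⟨Sum.inl (Fin.last (m + 1)), rfl⟩⟩
  · haveI := finE n
    exact Subtype.finite

lemma noloop_w (n : Fin (m + 2) → ℕ) :
    ∀ e : (Egraph (m + 2) n).E,
      ¬((Egraph (m + 2) n).s e = Sum.inl (Fin.last (m + 1)) ∧
        (Egraph (m + 2) n).r e = Sum.inl (Fin.last (m + 1))) := by
  rintro e ⟨hs, hr⟩
  cases e with
  | inl j =>
    rw [Egraph_s_inl] at hs
    injection hs with hj
    subst hj
    rw [Egraph_r_inl] at hr
    injection hr with hr'
    rw [Fin.ext_iff] at hr'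
    simp only [Fin.val_last] at hr'
    rw [show m + 1 + 1 = m + 2 from rfl, Nat.mod_self] at hr'
    omega
  | inr p =>
    rw [Egraph_s_inr] at hs
    exact absurd hs (by simp)

lemma stepRp (n : Fin (m + 2) → ℕ) :
    MoveRp (Egraph (m + 2) n)
      ((Egraph (m + 2) n).reduce (Sum.inl (Fin.last (m + 1)))) :=
  ⟨Sum.inl (Fin.last (m + 1)), reg_w n, noloop_w n, isoRefl _⟩

end

end EMoveAux

namespace EMoveAux

open CKGraph

section

variable {m : ℕ}

def Pmap (n : Fin (m + 2) → ℕ) :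
    {e : (Egraph (m + 1) (nstep n)).E // (Egraph (m + 1) (nstep n)).s e = uS n} → Fin 2 :=
  fun e => match e.val with
  | .inl _ => 0
  | .inr ⟨i, t⟩ => if i.val = 0 ∧ t.val = n 0 + n (Fin.last (m + 1)) then 1 else 0

def fwdV (n : Fin (m + 2) → ℕ) (hp : ∃ i, 0 < n i) :
    ({v : (Egraph (m + 1) (nstep n)).V // v ≠ uS n} ⊕ Fin 2) →
      ({v : (Egraph (m + 2) n).V // v ≠ Sum.inl (Fin.last (m + 1))} ⊕ Unit)
  | .inl ⟨.inl i, _⟩ =>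
      .inl ⟨.inl ⟨i.val, Nat.lt_succ_of_lt i.isLt⟩, by
        intro hEq
        have h2 := congrArg Fin.val (Sum.inl.inj hEq)
        have hi := i.isLt
        simp only [Fin.val_last] at h2
        omega⟩
  | .inl ⟨.inr x, h⟩ => absurd rfl h
  | .inr j => if j.val = 0 then .inl ⟨.inr ⟨(), hp⟩, fun hEq => Sum.inr_ne_inl hEq⟩ else .inr ()

def bwdV (n : Fin (m + 2) → ℕ) :
    ({v : (Egraph (m + 2) n).V // v ≠ Sum.inl (Fin.last (m + 1))} ⊕ Unit) →
      ({v : (Egraph (m + 1) (nstep n)).V // v ≠ uS n} ⊕ Fin 2)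
  | .inl ⟨.inl i, h⟩ =>
      .inl ⟨.inl ⟨i.val, by
        have hi := i.isLt
        have hne : i.val ≠ m + 1 := fun hv => h (by
          rw [show i = Fin.last (m + 1) from Fin.ext (by simpa using hv)])
        omega⟩, fun hEq => Sum.inl_ne_inr hEq⟩
  | .inl ⟨.inr _, _⟩ => .inr 0
  | .inr _ => .inr 1

def eqvV (n : Fin (m + 2) → ℕ) (hp : ∃ i, 0 < n i) :
    ({v : (Egraph (m + 1) (nstep n)).V // v ≠ uS n} ⊕ Fin 2) ≃
      ({v : (Egraph (m + 2) n).V // v ≠ Sum.inl (Fin.last (m + 1))} ⊕ Unit) where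
  toFun := fwdV n hp
  invFun := bwdV n
  left_inv := by
    rintro (⟨v, h⟩ | j)
    · cases v with
      | inl i => rfl
      | inr x => exact absurd rfl h
    · rcases j with ⟨jv, hj⟩
      interval_cases jv <;> rfl
  right_inv := by
    rintro (⟨v, h⟩ | u)
    · cases v with
      | inl i => rfl
      | inr x => rfl
    · rfl

end

end EMoveAux

namespace EMoveAux

open CKGraph

section

variable {m : ℕ}

lemma nstep_lt_to (n : Fin (m + 2) → ℕ) (i : Fin (m + 1)) (h : ¬ i.val = 0) (v : ℕ)
    (hv : v < nstep n i) : v < n ⟨i.val, Nat.lt_succ_of_lt i.isLt⟩ := by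
  rw [← nstep_ne n i h]; exact hv

lemma lt_nstep_of (n : Fin (m + 2) → ℕ) (i : Fin (m + 1)) (h : ¬ i.val = 0) (v : ℕ)
    (hv : v < n ⟨i.val, Nat.lt_succ_of_lt i.isLt⟩) : v < nstep n i := by
  rw [nstep_ne n i h]; exact hv

def fwdE (n : Fin (m + 2) → ℕ) :
    ({e : (Egraph (m + 1) (nstep n)).E // (Egraph (m + 1) (nstep n)).r e ≠ uS n} ⊕
      ({e : (Egraph (m + 1) (nstep n)).E // (Egraph (m + 1) (nstep n)).r e = uS n} × Fin 2)) →
    ({e : (Egraph (m + 2) n).E // (Egraph (m + 2) n).s e ≠ Sum.inl (Fin.last (m + 1)) ∧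
        (Egraph (m + 2) n).r e ≠ Sum.inl (Fin.last (m + 1))} ⊕
      (({e : (Egraph (m + 2) n).E // (Egraph (m + 2) n).r e = Sum.inl (Fin.last (m + 1))} ×
        {f : (Egraph (m + 2) n).E // (Egraph (m + 2) n).s f = Sum.inl (Fin.last (m + 1))}) ⊕
       {f : (Egraph (m + 2) n).E // (Egraph (m + 2) n).s f = Sum.inl (Fin.last (m + 1))}))
  | .inl ⟨.inl j, _⟩ =>
      if h : j.val + 1 < m + 1 then
        .inl ⟨.inl ⟨j.val, by omega⟩,
          ⟨by
            intro hEq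
            have h2 := congrArg Fin.val (Sum.inl.inj hEq)
            simp only [Fin.val_last] at h2
            omega,
           by
            intro hEq
            have h2 := congrArg Fin.val (Sum.inl.inj hEq)
            simp only [Fin.val_last] at h2
            rw [Nat.mod_eq_of_lt (by omega)] at h2
            omega⟩⟩
      else
        .inr (.inl (⟨.inl ⟨m, Nat.lt_succ_of_lt (Nat.lt_succ_self m)⟩,
          congrArg Sum.inl (Fin.ext (by
            show (m + 1) % (m + 2) = m + 1
            exact Nat.mod_eq_of_lt (by omega)))⟩, cE n))
  | .inl ⟨.inr ⟨i, t⟩, _⟩ =>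
      if h : i.val = 0 then
        if h2 : t.val < n 0 then
          .inl ⟨.inr ⟨0, ⟨t.val, h2⟩⟩,
            ⟨fun hEq => Sum.inr_ne_inl hEq,
             by
              intro hEq
              have h3 := congrArg Fin.val (Sum.inl.inj hEq)
              simp only [Fin.val_last, Fin.val_zero] at h3
              omega⟩⟩
        else if h3 : t.val < n 0 + n (Fin.last (m + 1)) then
          .inr (.inl (⟨.inr ⟨Fin.last (m + 1), ⟨t.val - n 0, by omega⟩⟩, rfl⟩, cE n))
        else
          .inr (.inr (cE n))
      else
        .inl ⟨.inr ⟨⟨i.val, Nat.lt_succ_of_lt i.isLt⟩, ⟨t.val,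
            nstep_lt_to n i h t.val t.isLt⟩⟩,
          ⟨fun hEq => Sum.inr_ne_inl hEq,
           by
            intro hEq
            have h2 := congrArg Fin.val (Sum.inl.inj hEq)
            simp only [Fin.val_last] at h2
            have := i.isLt
            omega⟩⟩
  | .inr q => absurd q.1.2 (r_ne_uS n q.1.1)

def bwdE (n : Fin (m + 2) → ℕ) :
    ({e : (Egraph (m + 2) n).E // (Egraph (m + 2) n).s e ≠ Sum.inl (Fin.last (m + 1)) ∧
        (Egraph (m + 2) n).r e ≠ Sum.inl (Fin.last (m + 1))} ⊕
      (({e : (Egraph (m + 2) n).E // (Egraph (m + 2) n).r e = Sum.inl (Fin.last (m + 1))} ×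
        {f : (Egraph (m + 2) n).E // (Egraph (m + 2) n).s f = Sum.inl (Fin.last (m + 1))}) ⊕
       {f : (Egraph (m + 2) n).E // (Egraph (m + 2) n).s f = Sum.inl (Fin.last (m + 1))})) →
    ({e : (Egraph (m + 1) (nstep n)).E // (Egraph (m + 1) (nstep n)).r e ≠ uS n} ⊕
      ({e : (Egraph (m + 1) (nstep n)).E // (Egraph (m + 1) (nstep n)).r e = uS n} × Fin 2))
  | .inl ⟨.inl j, hp⟩ =>
      .inl ⟨.inl ⟨j.val, by
        have hj := j.isLt
        have hne : j.val ≠ m + 1 := fun hv =>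
          hp.1 (congrArg Sum.inl (Fin.ext (by simpa using hv)))
        omega⟩, r_ne_uS n _⟩
  | .inl ⟨.inr ⟨i, t⟩, hp⟩ =>
      if h : i.val = 0 then
        .inl ⟨.inr ⟨0, ⟨t.val, by
          have hi : i = 0 := Fin.ext (by simpa using h)
          have ht : t.val < n 0 := by rw [← hi]; exact t.isLt
          rw [nstep_zero]
          omega⟩⟩, r_ne_uS n _⟩
      else
        .inl ⟨.inr ⟨⟨i.val, by
          have hj := i.isLt
          have hne : i.val ≠ m + 1 := fun hv =>
            hp.2 (congrArg Sum.inl (Fin.ext (by simpa using hv)))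
          omega⟩, ⟨t.val, lt_nstep_of n _ h t.val t.isLt⟩⟩, r_ne_uS n _⟩
  | .inr (.inl (⟨.inl j, _⟩, _)) =>
      .inl ⟨.inl ⟨m, Nat.lt_succ_self m⟩, r_ne_uS n _⟩
  | .inr (.inl (⟨.inr ⟨i, t⟩, he⟩, _)) =>
      .inl ⟨.inr ⟨0, ⟨n 0 + t.val, by
        have hi : i = Fin.last (m + 1) := Sum.inl.inj he
        have ht : t.val < n (Fin.last (m + 1)) := by rw [← hi]; exact t.isLt
        rw [nstep_zero]
        omega⟩⟩, r_ne_uS n _⟩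
  | .inr (.inr _) =>
      .inl ⟨.inr ⟨0, ⟨n 0 + n (Fin.last (m + 1)), by rw [nstep_zero]; omega⟩⟩, r_ne_uS n _⟩

end

end EMoveAux

namespace EMoveAux

open CKGraph

section

variable {m : ℕ}

def eqvE (n : Fin (m + 2) → ℕ) :
    ({e : (Egraph (m + 1) (nstep n)).E // (Egraph (m + 1) (nstep n)).r e ≠ uS n} ⊕
      ({e : (Egraph (m + 1) (nstep n)).E // (Egraph (m + 1) (nstep n)).r e = uS n} × Fin 2)) ≃
    ({e : (Egraph (m + 2) n).E // (Egraph (m + 2) n).s e ≠ Sum.inl (Fin.last (m + 1)) ∧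
        (Egraph (m + 2) n).r e ≠ Sum.inl (Fin.last (m + 1))} ⊕
      (({e : (Egraph (m + 2) n).E // (Egraph (m + 2) n).r e = Sum.inl (Fin.last (m + 1))} ×
        {f : (Egraph (m + 2) n).E // (Egraph (m + 2) n).s f = Sum.inl (Fin.last (m + 1))}) ⊕
       {f : (Egraph (m + 2) n).E // (Egraph (m + 2) n).s f = Sum.inl (Fin.last (m + 1))})) where
  toFun := fwdE n
  invFun := bwdE n
  left_inv := by
    rintro (⟨e, he⟩ | q)
    · cases e with
      | inl j =>
        simp only [fwdE]
        by_cases h : j.val + 1 < m + 1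
        · rw [dif_pos h]
          simp only [bwdE]
        · rw [dif_neg h]
          simp only [bwdE]
          have hj : j.val = m := by have := j.isLt; omega
          exact congrArg Sum.inl (Subtype.ext (congrArg Sum.inl (Fin.ext hj.symm)))
      | inr p =>
        obtain ⟨i, t⟩ := p
        simp only [fwdE]
        by_cases h : i.val = 0
        · rw [dif_pos h]
          have hi : i = 0 := Fin.ext (by simpa using h)
          subst hi
          by_cases h2 : t.val < n 0
          · rw [dif_pos h2]
            simp only [bwdE]
            rw [dif_pos (show ((0 : Fin (m + 2))).val = 0 from rfl)]
          · rw [dif_neg h2]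
            by_cases h3 : t.val < n 0 + n (Fin.last (m + 1))
            · rw [dif_pos h3]
              simp only [bwdE]
              have hv : n 0 + (t.val - n 0) = t.val := by omega
              exact congrArg Sum.inl (Subtype.ext (congrArg Sum.inr
                (congrArg (Sigma.mk 0) (Fin.ext hv))))
            · rw [dif_neg h3]
              simp only [bwdE]
              have ht := lt_of_lt_of_le t.isLt (le_of_eq (nstep_zero n))
              have hv : n 0 + n (Fin.last (m + 1)) = t.val := by omega
              exact congrArg Sum.inl (Subtype.ext (congrArg Sum.inr
                (congrArg (Sigma.mk 0) (Fin.ext hv))))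
        · rw [dif_neg h]
          simp only [bwdE]
          rw [dif_neg h]
    · exact absurd q.1.2 (r_ne_uS n q.1.1)
  right_inv := by
    rintro (⟨e, hs, hr⟩ | (⟨⟨e, he⟩, c⟩ | c))
    · cases e with
      | inl j =>
        have h1 : j.val ≠ m + 1 := fun hv =>
          hs (congrArg Sum.inl (Fin.ext (by simpa using hv)))
        have hl := j.isLt
        have h2 : j.val ≠ m := by
          intro hv
          apply hr
          refine congrArg Sum.inl (Fin.ext ?_)
          show (j.val + 1) % (m + 2) = m + 1
          rw [hv]
          exact Nat.mod_eq_of_lt (by omega)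
        simp only [bwdE, fwdE]
        rw [dif_pos (show j.val + 1 < m + 1 by omega)]
      | inr p =>
        obtain ⟨i, t⟩ := p
        simp only [bwdE]
        by_cases h : i.val = 0
        · rw [dif_pos h]
          have hi : i = 0 := Fin.ext (by simpa using h)
          have ht : t.val < n 0 := by rw [← hi]; exact t.isLt
          simp only [fwdE]
          rw [dif_pos (show ((0 : Fin (m + 1))).val = 0 from rfl)]
          rw [dif_pos ht]
          subst hi
          rfl
        · rw [dif_neg h]
          simp only [fwdE]
          rw [dif_neg h]
    · cases e with
      | inl j =>
        have hj : j.val = m := by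
          have hv := congrArg Fin.val (Sum.inl.inj he)
          simp only [Fin.val_last] at hv
          have hl := j.isLt
          rcases Nat.lt_or_ge (j.val + 1) (m + 2) with hx | hx
          · rw [Nat.mod_eq_of_lt hx] at hv; omega
          · have hx2 : j.val + 1 = m + 2 := by omega
            rw [hx2, Nat.mod_self] at hv; omega
        simp only [bwdE, fwdE]
        rw [dif_neg (show ¬(m + 1 < m + 1) by omega)]
        rw [cE_unique n c]
        exact congrArg (fun z => Sum.inr (Sum.inl (z, cE n)))
          (Subtype.ext (congrArg Sum.inl (Fin.ext hj.symm)))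
      | inr p =>
        obtain ⟨i, t⟩ := p
        have hi : i = Fin.last (m + 1) := Sum.inl.inj he
        subst hi
        simp only [bwdE, fwdE]
        rw [dif_pos (show ((0 : Fin (m + 1))).val = 0 from rfl)]
        rw [dif_neg (show ¬(n 0 + t.val < n 0) by omega)]
        have ht : t.val < n (Fin.last (m + 1)) := t.isLt
        rw [dif_pos (show n 0 + t.val < n 0 + n (Fin.last (m + 1)) by omega)]
        rw [cE_unique n c]
        have hv : n 0 + t.val - n 0 = t.val := by omega
        exact congrArg (fun z => Sum.inr (Sum.inl (z, cE n)))
          (Subtype.ext (congrArg Sum.inr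
            (congrArg (Sigma.mk (Fin.last (m + 1))) (Fin.ext hv))))
    · simp only [bwdE, fwdE]
      rw [dif_pos (show ((0 : Fin (m + 1))).val = 0 from rfl)]
      rw [dif_neg (show ¬(n 0 + n (Fin.last (m + 1)) < n 0) by omega)]
      rw [dif_neg (show ¬(n 0 + n (Fin.last (m + 1)) < n 0 + n (Fin.last (m + 1))) by omega)]
      rw [cE_unique n c]

end

end EMoveAux

namespace EMoveAux

open CKGraph

section

variable {m : ℕ}

lemma L_s_inl_ne (n : Fin (m + 2) → ℕ) (j : Fin (m + 1)) :
    ¬ ((Egraph (m + 1) (nstep n)).s (Sum.inl j) = uS n) :=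
  fun hEq => Sum.inl_ne_inr hEq

lemma G_s_inl_ne (n : Fin (m + 2) → ℕ) (j : Fin (m + 2)) (hj : j.val ≠ m + 1) :
    ¬ ((Egraph (m + 2) n).s (Sum.inl j) = Sum.inl (Fin.last (m + 1))) :=
  fun hEq => hj (by simpa using congrArg Fin.val (Sum.inl.inj hEq))

lemma G_s_inr_ne (n : Fin (m + 2) → ℕ) (p : Σ i : Fin (m + 2), Fin (n i)) :
    ¬ ((Egraph (m + 2) n).s (Sum.inr p) = Sum.inl (Fin.last (m + 1))) :=
  fun hEq => Sum.inr_ne_inl hEq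

lemma G_r_cE_ne (n : Fin (m + 2) → ℕ) :
    ¬ ((Egraph (m + 2) n).r ((cE n).1) = Sum.inl (Fin.last (m + 1))) := by
  intro hEq
  have h2 := congrArg Fin.val (Sum.inl.inj hEq)
  simp only [Fin.val_last] at h2
  rw [show m + 1 + 1 = m + 2 from rfl, Nat.mod_self] at h2
  omega

lemma sInt (n : Fin (m + 2) → ℕ) (hp : ∃ i, 0 < n i)
    (e : ((Egraph (m + 1) (nstep n)).outsplit (uS n) 2 (Pmap n)).E) :
    ((Egraph (m + 2) n).reduce (Sum.inl (Fin.last (m + 1)))).s (fwdE n e) =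
      fwdV n hp (((Egraph (m + 1) (nstep n)).outsplit (uS n) 2 (Pmap n)).s e) := by
  rcases e with ⟨e, he⟩ | q
  · cases e with
    | inl j =>
      rw [outsplit_s_inl, dif_neg (L_s_inl_ne n j)]
      simp only [fwdE]
      by_cases h : j.val + 1 < m + 1
      · erw [dif_pos h, reduce_s_inl]
        rfl
      · erw [dif_neg h, reduce_s_pair,
          dif_neg (G_s_inl_ne n _ (by show m ≠ m + 1; omega))]
        have hj : j.val = m := by have := j.isLt; omega
        exact congrArg Sum.inl (Subtype.ext (congrArg Sum.inl (Fin.ext (by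
          show m = _
          simp [hj]))))
    | inr p =>
      obtain ⟨i, t⟩ := p
      rw [outsplit_s_inl, dif_pos (s_src n ⟨i, t⟩)]
      simp only [Pmap, fwdE]
      by_cases h : i.val = 0
      · rw [dif_pos h]
        by_cases h2 : t.val < n 0
        · erw [dif_pos h2, if_neg (by omega), reduce_s_inl]
          simp only [fwdV, if_pos (show ((0 : Fin 2)).val = 0 from rfl)]
          rfl
        · by_cases h3 : t.val < n 0 + n (Fin.last (m + 1))
          · erw [dif_neg h2, dif_pos h3, if_neg (by omega), reduce_s_pair,
              dif_neg (G_s_inr_ne n _)]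
            simp only [fwdV, if_pos (show ((0 : Fin 2)).val = 0 from rfl)]
            rfl
          · have hi : i = 0 := Fin.ext (by simpa using h)
            have ht : t.val < nstep n 0 := by rw [← hi]; exact t.isLt
            rw [nstep_zero] at ht
            erw [dif_neg h2, dif_neg h3, if_pos (by omega), reduce_s_tail]
            simp only [fwdV, if_neg (show ¬((1 : Fin 2)).val = 0 by decide)]
            rfl
      · erw [dif_neg h, if_neg (by omega), reduce_s_inl]
        simp only [fwdV, if_pos (show ((0 : Fin 2)).val = 0 from rfl)]
        rfl
  · exact absurd q.1.2 (r_ne_uS n q.1.1)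

lemma rInt (n : Fin (m + 2) → ℕ) (hp : ∃ i, 0 < n i)
    (e : ((Egraph (m + 1) (nstep n)).outsplit (uS n) 2 (Pmap n)).E) :
    ((Egraph (m + 2) n).reduce (Sum.inl (Fin.last (m + 1)))).r (fwdE n e) =
      fwdV n hp (((Egraph (m + 1) (nstep n)).outsplit (uS n) 2 (Pmap n)).r e) := by
  rcases e with ⟨e, he⟩ | q
  · cases e with
    | inl j =>
      simp only [outsplit_r_inl, Egraph_r_inl, fwdE, fwdV]
      by_cases h : j.val + 1 < m + 1
      · erw [dif_pos h, reduce_r_inl]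
        simp only [fwdV]
        exact congrArg Sum.inl (Subtype.ext (congrArg Sum.inl (Fin.ext (by
          show (j.val + 1) % (m + 2) = (j.val + 1) % (m + 1)
          rw [Nat.mod_eq_of_lt (by omega), Nat.mod_eq_of_lt (by omega)]))))
      · erw [dif_neg h, reduce_r_pair, dif_neg (G_r_cE_ne n)]
        simp only [fwdV]
        have hj : j.val = m := by have := j.isLt; omega
        exact congrArg Sum.inl (Subtype.ext (congrArg Sum.inl (Fin.ext (by
          show ((Fin.last (m + 1)).val + 1) % (m + 2) = (j.val + 1) % (m + 1)
          rw [show (Fin.last (m + 1)).val + 1 = m + 2 from rfl, Nat.mod_self, hj,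
            Nat.mod_self]))))
    | inr p =>
      obtain ⟨i, t⟩ := p
      simp only [outsplit_r_inl, Egraph_r_inr, fwdE, fwdV]
      by_cases h : i.val = 0
      · rw [dif_pos h]
        by_cases h2 : t.val < n 0
        · erw [dif_pos h2, reduce_r_inl]
          exact congrArg Sum.inl (Subtype.ext (congrArg Sum.inl (Fin.ext (by
            show (0 : ℕ) = i.val
            omega))))
        · by_cases h3 : t.val < n 0 + n (Fin.last (m + 1))
          · erw [dif_neg h2, dif_pos h3, reduce_r_pair, dif_neg (G_r_cE_ne n)]
            exact congrArg Sum.inl (Subtype.ext (congrArg Sum.inl (Fin.ext (by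
              show ((Fin.last (m + 1)).val + 1) % (m + 2) = i.val
              rw [show (Fin.last (m + 1)).val + 1 = m + 2 from rfl, Nat.mod_self]
              omega))))
          · erw [dif_neg h2, dif_neg h3, reduce_r_tail, dif_neg (G_r_cE_ne n)]
            exact congrArg Sum.inl (Subtype.ext (congrArg Sum.inl (Fin.ext (by
              show ((Fin.last (m + 1)).val + 1) % (m + 2) = i.val
              rw [show (Fin.last (m + 1)).val + 1 = m + 2 from rfl, Nat.mod_self]
              omega))))
      · erw [dif_neg h, reduce_r_inl]
        rfl
  · exact absurd q.1.2 (r_ne_uS n q.1.1)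

end

end EMoveAux

namespace EMoveAux

open CKGraph

section

variable {m : ℕ}

lemma stepO (n : Fin (m + 2) → ℕ) (hp : ∃ i, 0 < n i) :
    MoveO (Egraph (m + 1) (nstep n))
      ((Egraph (m + 2) n).reduce (Sum.inl (Fin.last (m + 1)))) := by
  refine ⟨uS n, 2, Pmap n, ?_, ?_, ?_, ⟨eqvV n hp, eqvE n, sInt n hp, rInt n hp⟩⟩
  · exact ⟨⟨Sum.inr ⟨0, ⟨0, by rw [nstep_zero]; omega⟩⟩, s_src n _⟩⟩
  · intro b
    fin_cases b
    · obtain ⟨i0, hi0⟩ := hp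
      by_cases hl : i0.val = m + 1
      · have hlast : 0 < n (Fin.last (m + 1)) := by
          rw [show Fin.last (m + 1) = i0 from Fin.ext (by simpa using hl.symm)]
          exact hi0
        refine ⟨⟨Sum.inr ⟨0, ⟨n 0, by rw [nstep_zero]; omega⟩⟩, s_src n _⟩, ?_⟩
        simp only [Pmap]
        rw [if_neg (fun hc => absurd hc.2
          (by show ¬(n 0 = n 0 + n (Fin.last (m + 1))); omega))]
        rfl
      · by_cases h0 : i0.val = 0
        · have h00 : 0 < n 0 := by
            rw [show (0 : Fin (m + 2)) = i0 from Fin.ext (by simpa using h0.symm)]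
            exact hi0
          refine ⟨⟨Sum.inr ⟨0, ⟨0, by rw [nstep_zero]; omega⟩⟩, s_src n _⟩, ?_⟩
          simp only [Pmap]
          rw [if_neg (fun hc => absurd hc.2
            (by show ¬((0 : ℕ) = n 0 + n (Fin.last (m + 1))); omega))]
          rfl
        · have hlt : i0.val < m + 1 := by have := i0.isLt; omega
          have hpos : 0 < nstep n ⟨i0.val, hlt⟩ := by
            rw [nstep_ne n ⟨i0.val, hlt⟩ h0]
            exact hi0
          refine ⟨⟨Sum.inr ⟨⟨i0.val, hlt⟩, ⟨0, hpos⟩⟩, s_src n _⟩, ?_⟩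
          simp only [Pmap]
          rw [if_neg (fun hc => absurd hc.1 (by show ¬(i0.val = 0); omega))]
          rfl
    · refine ⟨⟨Sum.inr ⟨0, ⟨n 0 + n (Fin.last (m + 1)),
        by rw [nstep_zero]; omega⟩⟩, s_src n _⟩, ?_⟩
      simp only [Pmap]
      rfl
  · intro i j hi hj
    haveI : Finite (Egraph (m + 1) (nstep n)).E := finE _
    haveI : Finite {e : (Egraph (m + 1) (nstep n)).E //
        (Egraph (m + 1) (nstep n)).s e = uS n} := Subtype.finite
    exact absurd hi (Set.toFinite _).not_infinite

end

end EMoveAux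

namespace EMoveAux

open CKGraph

section

variable {m : ℕ}

def fwdVZ (n : Fin (m + 2) → ℕ) (hz : ∀ i, n i = 0) :
    ((Egraph (m + 2) n).reduce (Sum.inl (Fin.last (m + 1)))).V →
      (Egraph (m + 1) (nstep n)).V
  | .inl ⟨.inl i, h⟩ =>
      .inl ⟨i.val, by
        have hi := i.isLt
        have hne : i.val ≠ m + 1 := fun hv => h (congrArg Sum.inl (Fin.ext (by simpa using hv)))
        omega⟩
  | .inl ⟨.inr x, _⟩ => absurd x.2 (by simp [hz])
  | .inr _ => uS n

def bwdVZ (n : Fin (m + 2) → ℕ) :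
    (Egraph (m + 1) (nstep n)).V →
      ((Egraph (m + 2) n).reduce (Sum.inl (Fin.last (m + 1)))).V
  | .inl i =>
      .inl ⟨.inl ⟨i.val, Nat.lt_succ_of_lt i.isLt⟩, by
        intro hEq
        have h2 := congrArg Fin.val (Sum.inl.inj hEq)
        have hi := i.isLt
        simp only [Fin.val_last] at h2
        omega⟩
  | .inr _ => .inr ()

def eqvVZ (n : Fin (m + 2) → ℕ) (hz : ∀ i, n i = 0) :
    ((Egraph (m + 2) n).reduce (Sum.inl (Fin.last (m + 1)))).V ≃
      (Egraph (m + 1) (nstep n)).V where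
  toFun := fwdVZ n hz
  invFun := bwdVZ n
  left_inv := by
    rintro (⟨v, h⟩ | u)
    · cases v with
      | inl i => rfl
      | inr x => exact absurd x.2 (by simp [hz])
    · rfl
  right_inv := by
    rintro (i | x)
    · rfl
    · rfl

def fwdEZ (n : Fin (m + 2) → ℕ) (hz : ∀ i, n i = 0) :
    ((Egraph (m + 2) n).reduce (Sum.inl (Fin.last (m + 1)))).E →
      (Egraph (m + 1) (nstep n)).E
  | .inl ⟨.inl j, hp⟩ =>
      .inl ⟨j.val, by
        have hj := j.isLt
        have hne : j.val ≠ m + 1 := fun hv =>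
          hp.1 (congrArg Sum.inl (Fin.ext (by simpa using hv)))
        omega⟩
  | .inl ⟨.inr p, _⟩ => absurd p.2.isLt (by have := hz p.1; omega)
  | .inr (.inl (⟨.inl j, _⟩, _)) => .inl ⟨m, Nat.lt_succ_self m⟩
  | .inr (.inl (⟨.inr p, _⟩, _)) => absurd p.2.isLt (by have := hz p.1; omega)
  | .inr (.inr _) => .inr ⟨0, ⟨0, by rw [nstep_zero]; omega⟩⟩

def bwdEZ (n : Fin (m + 2) → ℕ) :
    (Egraph (m + 1) (nstep n)).E →
      ((Egraph (m + 2) n).reduce (Sum.inl (Fin.last (m + 1)))).E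
  | .inl j =>
      if h : j.val + 1 < m + 1 then
        .inl ⟨.inl ⟨j.val, by omega⟩,
          ⟨by
            intro hEq
            have h2 := congrArg Fin.val (Sum.inl.inj hEq)
            simp only [Fin.val_last] at h2
            omega,
           by
            intro hEq
            have h2 := congrArg Fin.val (Sum.inl.inj hEq)
            simp only [Fin.val_last] at h2
            rw [Nat.mod_eq_of_lt (by omega)] at h2
            omega⟩⟩
      else
        .inr (.inl (⟨.inl ⟨m, Nat.lt_succ_of_lt (Nat.lt_succ_self m)⟩,
          congrArg Sum.inl (Fin.ext (by
            show (m + 1) % (m + 2) = m + 1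
            exact Nat.mod_eq_of_lt (by omega)))⟩, cE n))
  | .inr _ => .inr (.inr (cE n))

def eqvEZ (n : Fin (m + 2) → ℕ) (hz : ∀ i, n i = 0) :
    ((Egraph (m + 2) n).reduce (Sum.inl (Fin.last (m + 1)))).E ≃
      (Egraph (m + 1) (nstep n)).E where
  toFun := fwdEZ n hz
  invFun := bwdEZ n
  left_inv := by
    rintro (⟨e, hs, hr⟩ | (⟨⟨e, he⟩, c⟩ | c))
    · cases e with
      | inl j =>
        have h1 : j.val ≠ m + 1 := fun hv =>
          hs (congrArg Sum.inl (Fin.ext (by simpa using hv)))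
        have hl := j.isLt
        have h2 : j.val ≠ m := by
          intro hv
          apply hr
          refine congrArg Sum.inl (Fin.ext ?_)
          show (j.val + 1) % (m + 2) = m + 1
          rw [hv]
          exact Nat.mod_eq_of_lt (by omega)
        simp only [fwdEZ, bwdEZ]
        erw [dif_pos (show j.val + 1 < m + 1 by omega)]
      | inr p => exact absurd p.2.isLt (by have := hz p.1; omega)
    · cases e with
      | inl j =>
        have hj : j.val = m := by
          have hv := congrArg Fin.val (Sum.inl.inj he)
          simp only [Fin.val_last] at hv
          have hl := j.isLt
          rcases Nat.lt_or_ge (j.val + 1) (m + 2) with hx | hx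
          · rw [Nat.mod_eq_of_lt hx] at hv; omega
          · have hx2 : j.val + 1 = m + 2 := by omega
            rw [hx2, Nat.mod_self] at hv; omega
        simp only [fwdEZ, bwdEZ]
        erw [dif_neg (show ¬(m + 1 < m + 1) by omega)]
        rw [cE_unique n c]
        exact congrArg (fun z => Sum.inr (Sum.inl (z, cE n)))
          (Subtype.ext (congrArg Sum.inl (Fin.ext hj.symm)))
      | inr p => exact absurd p.2.isLt (by have := hz p.1; omega)
    · simp only [fwdEZ, bwdEZ]
      rw [cE_unique n c]
  right_inv := by
    rintro (j | p)
    · simp only [bwdEZ]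
      by_cases h : j.val + 1 < m + 1
      · erw [dif_pos h]
        simp only [fwdEZ]
        rfl
      · erw [dif_neg h]
        simp only [fwdEZ]
        have hj : j.val = m := by have := j.isLt; omega
        exact congrArg Sum.inl (Fin.ext hj.symm)
    · obtain ⟨i, t⟩ := p
      simp only [bwdEZ, fwdEZ]
      have hi : i.val = 0 := by
        by_contra hne
        have h2 : 0 < nstep n i := lt_of_le_of_lt (Nat.zero_le _) t.isLt
        rw [nstep_ne n i hne] at h2
        have := hz ⟨i.val, Nat.lt_succ_of_lt i.isLt⟩
        omega
      have hieq : i = 0 := Fin.ext (by simpa using hi)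
      subst hieq
      have ht : t.val = 0 := by
        have h2 := lt_of_lt_of_le t.isLt (le_of_eq (nstep_zero n))
        have ha := hz 0
        have hb := hz (Fin.last (m + 1))
        omega
      exact congrArg Sum.inr (congrArg (Sigma.mk 0) (Fin.ext ht.symm))

lemma sIntZ (n : Fin (m + 2) → ℕ) (hz : ∀ i, n i = 0)
    (e : ((Egraph (m + 2) n).reduce (Sum.inl (Fin.last (m + 1)))).E) :
    (Egraph (m + 1) (nstep n)).s (fwdEZ n hz e) =
      fwdVZ n hz (((Egraph (m + 2) n).reduce (Sum.inl (Fin.last (m + 1)))).s e) := by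
  rcases e with ⟨e, hs, hr⟩ | (⟨⟨e, he⟩, c⟩ | c)
  · cases e with
    | inl j => rfl
    | inr p => exact absurd p.2.isLt (by have := hz p.1; omega)
  · cases e with
    | inl j =>
      have hv := congrArg Fin.val (Sum.inl.inj he)
      simp only [Fin.val_last] at hv
      have hl := j.isLt
      have hj : j.val = m := by
        rcases Nat.lt_or_ge (j.val + 1) (m + 2) with hx | hx
        · rw [Nat.mod_eq_of_lt hx] at hv; omega
        · have hx2 : j.val + 1 = m + 2 := by omega
          rw [hx2, Nat.mod_self] at hv; omega
      erw [reduce_s_pair, dif_neg (G_s_inl_ne n j (by omega))]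
      exact congrArg Sum.inl (Fin.ext (by show m = j.val; omega))
    | inr p => exact absurd p.2.isLt (by have := hz p.1; omega)
  · rfl

lemma rIntZ (n : Fin (m + 2) → ℕ) (hz : ∀ i, n i = 0)
    (e : ((Egraph (m + 2) n).reduce (Sum.inl (Fin.last (m + 1)))).E) :
    (Egraph (m + 1) (nstep n)).r (fwdEZ n hz e) =
      fwdVZ n hz (((Egraph (m + 2) n).reduce (Sum.inl (Fin.last (m + 1)))).r e) := by
  rcases e with ⟨e, hs, hr⟩ | (⟨⟨e, he⟩, c⟩ | c)
  · cases e with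
    | inl j =>
      have h1 : j.val ≠ m + 1 := fun hv =>
        hs (congrArg Sum.inl (Fin.ext (by simpa using hv)))
      have hl := j.isLt
      have h2 : j.val ≠ m := by
        intro hv
        apply hr
        refine congrArg Sum.inl (Fin.ext ?_)
        show (j.val + 1) % (m + 2) = m + 1
        rw [hv]
        exact Nat.mod_eq_of_lt (by omega)
      erw [reduce_r_inl]
      simp only [Egraph_r_inl, fwdVZ, fwdEZ]
      exact congrArg Sum.inl (Fin.ext (by
        show (j.val + 1) % (m + 1) = (j.val + 1) % (m + 2)
        rw [Nat.mod_eq_of_lt (by omega), Nat.mod_eq_of_lt (by omega)]))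
    | inr p => exact absurd p.2.isLt (by have := hz p.1; omega)
  · cases e with
    | inl j =>
      erw [cE_unique n c, reduce_r_pair, dif_neg (G_r_cE_ne n)]
      exact congrArg Sum.inl (Fin.ext (by
        show (m + 1) % (m + 1) = ((Fin.last (m + 1)).val + 1) % (m + 2)
        rw [Nat.mod_self, show (Fin.last (m + 1)).val + 1 = m + 2 from rfl, Nat.mod_self]))
    | inr p => exact absurd p.2.isLt (by have := hz p.1; omega)
  · erw [cE_unique n c, reduce_r_tail, dif_neg (G_r_cE_ne n)]
    exact congrArg Sum.inl (Fin.ext (by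
      show (0 : ℕ) = ((Fin.last (m + 1)).val + 1) % (m + 2)
      rw [show (Fin.last (m + 1)).val + 1 = m + 2 from rfl, Nat.mod_self]))

lemma stepRp_zero (n : Fin (m + 2) → ℕ) (hz : ∀ i, n i = 0) :
    MoveRp (Egraph (m + 2) n) (Egraph (m + 1) (nstep n)) :=
  ⟨Sum.inl (Fin.last (m + 1)), reg_w n, noloop_w n,
    ⟨eqvVZ n hz, eqvEZ n hz, sIntZ n hz, rIntZ n hz⟩⟩

end

end EMoveAux

namespace EMoveAux

open CKGraph

theorem auxMain (m : ℕ) : ∀ n : Fin (m + 1) → ℕ,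
    MoveEquiv (fun A B => MoveO A B ∨ MoveRp A B) (Egraph (m + 1) n)
      (Egraph 1 (fun _ => (∑ i, (n i + 1)) - 1)) := by
  induction m with
  | zero =>
    intro n
    have hn : (fun _ : Fin 1 => (∑ i, (n i + 1)) - 1) = n := by
      funext j
      have hj : j = 0 := Subsingleton.elim _ _
      subst hj
      rw [Fin.sum_univ_one]
      omega
    exact ⟨Egraph 1 n, Relation.ReflTransGen.refl, by rw [hn]; exact isoRefl _⟩
  | succ m ih =>
    intro n
    have hsum : (fun _ : Fin 1 => (∑ i : Fin (m + 1), (nstep n i + 1)) - 1)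
        = (fun _ : Fin 1 => (∑ i : Fin (m + 2), (n i + 1)) - 1) := by
      funext _
      rw [nstep_sum]
    obtain ⟨K, hK, hI⟩ := ih (nstep n)
    by_cases hp : ∃ i, 0 < n i
    · refine ⟨K, ?_, hsum ▸ hI⟩
      exact Relation.ReflTransGen.head (Or.inl (Or.inr (stepRp n)))
        (Relation.ReflTransGen.head (Or.inr (Or.inl (stepO n hp))) hK)
    · have hz : ∀ i, n i = 0 := by
        intro i
        by_contra hne
        exact hp ⟨i, by omega⟩
      exact ⟨K, Relation.ReflTransGen.head
        (Or.inl (Or.inr (stepRp_zero n hz))) hK, hsum ▸ hI⟩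

end EMoveAux

/-- For `k ≥ 1` and `n₁, …, n_k ≥ 0`, the graph `E(n₁,…,n_k)` is
move equivalent via the moves (O) and (R+) to the graph `E(N)` with a single
cycle vertex, where `N = (n₁+1) + ⋯ + (n_k+1) − 1`. -/
theorem Egraph_moveEquiv_O_Rplus (k : ℕ) (hk : 1 ≤ k) (n : Fin k → ℕ) :
    MoveEquiv (fun A B => MoveO A B ∨ MoveRp A B)
      (Egraph k n) (Egraph 1 (fun _ => (∑ i, (n i + 1)) - 1)) := by
  obtain ⟨m, rfl⟩ : ∃ m, k = m + 1 := ⟨k - 1, by omega⟩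
  exact EMoveAux.auxMain m n
end

section
/- Let h : G → G be an order isomorphism of G = ⊕_{i∈ℤ} ℤ (with the coordinatewise order) satisfying h∘σ = σ∘h. Suppose that for integers k, ℓ ≥ 0 and integers n₁, …, n_k ≥ 1 and m₁, …, m_ℓ ≥ 1 one has h(e₀ + Σ_{i=1}^{k} nᵢ e_i) = e₀ + Σ_{j=1}^{ℓ} m_j e_j. Then k = ℓ and nᵢ = mᵢ for all 1 ≤ i ≤ k. -/
/-- The shift automorphism `σ` of `⊕_{i∈ℤ} ℤ`, determined by
`σ(e_i) = e_{i+1}`. -/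
noncomputable def shiftZ : (ℤ →₀ ℤ) ≃+ (ℤ →₀ ℤ) :=
  Finsupp.domCongr (Equiv.addRight (1 : ℤ))

lemma shiftZ_single (t a : ℤ) : shiftZ (Finsupp.single t a) = Finsupp.single (t+1) a := by
  rw [shiftZ, Finsupp.domCongr_apply, Finsupp.equivMapDomain_single, Equiv.coe_addRight]

lemma sumS_apply_ne (k : ℕ) (ν : Fin k → ℤ) (d t : ℤ)
    (ht : ∀ i : Fin k, ((i:ℕ):ℤ)+1+d ≠ t) :
    (∑ i : Fin k, Finsupp.single (((i:ℕ):ℤ)+1+d) (ν i)) t = 0 := by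
  rw [Finsupp.finset_sum_apply]
  exact Finset.sum_eq_zero fun i _ => by
    rw [Finsupp.single_apply, if_neg (ht i)]

lemma sumS_apply_at (k : ℕ) (ν : Fin k → ℤ) (d : ℤ) (j : Fin k) :
    (∑ i : Fin k, Finsupp.single (((i:ℕ):ℤ)+1+d) (ν i)) (((j:ℕ):ℤ)+1+d) = ν j := by
  rw [Finsupp.finset_sum_apply]
  rw [Finset.sum_eq_single j]
  · rw [Finsupp.single_apply, if_pos rfl]
  · intro i _ hij
    rw [Finsupp.single_apply]
    apply if_neg
    intro hEq
    apply hij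
    have : ((i:ℕ):ℤ) = ((j:ℕ):ℤ) := by linarith
    exact Fin.ext (by exact_mod_cast this)
  · intro hj; exact absurd (Finset.mem_univ j) hj

lemma sumS0_apply_ne (k : ℕ) (ν : Fin k → ℤ) (t : ℤ)
    (ht : ∀ i : Fin k, ((i:ℕ):ℤ)+1 ≠ t) :
    (∑ i : Fin k, Finsupp.single (((i:ℕ):ℤ)+1) (ν i)) t = 0 := by
  have := sumS_apply_ne k ν 0 t (by simpa using ht)
  simpa using this

lemma sumS0_apply_at (k : ℕ) (ν : Fin k → ℤ) (j : Fin k) :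
    (∑ i : Fin k, Finsupp.single (((i:ℕ):ℤ)+1) (ν i)) (((j:ℕ):ℤ)+1) = ν j := by
  have := sumS_apply_at k ν 0 j
  simpa using this

/-- minimality of `single 0 1` among positive elements -/
lemma min_single (g : ℤ →₀ ℤ) (hg0 : (0:ℤ→₀ℤ) ≤ g) (hgne : g ≠ 0)
    (hgle : g ≤ Finsupp.single (0:ℤ) 1) :
    g = Finsupp.single (0:ℤ) 1 := by
  have hzero : ∀ y : ℤ, y ≠ 0 → g y = 0 := by
    intro y hy
    have h1 : g y ≤ (Finsupp.single (0:ℤ) 1) y := hgle y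
    have h2 : (0:ℤ) ≤ g y := hg0 y
    rw [Finsupp.single_apply, if_neg (fun hc => hy hc.symm)] at h1
    omega
  have hone : g 0 = 1 := by
    have h1 : g 0 ≤ (Finsupp.single (0:ℤ) 1) 0 := hgle 0
    have h2 : (0:ℤ) ≤ g 0 := hg0 0
    rw [Finsupp.single_apply, if_pos rfl] at h1
    rcases (by omega : g 0 = 0 ∨ g 0 = 1) with h | h
    · exfalso; apply hgne; ext y
      by_cases hy : y = 0
      · simpa [hy] using h
      · simp [hzero y hy]
    · exact h
  ext x
  by_cases hx : x = 0
  · rw [hx, hone, Finsupp.single_eq_same]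
  · rw [hzero x hx, Finsupp.single_apply, if_neg (fun hc => hx hc.symm)]

/-- An order isomorphism of `⊕_{i∈ℤ} ℤ` (coordinatewise order)
commuting with the shift and sending `e₀ + Σ nᵢ e_i` to `e₀ + Σ m_j e_j`
(with all `nᵢ, m_j ≥ 1`) forces `k = ℓ` and `nᵢ = mᵢ` for all `i`. -/
theorem pointed_K_rigidity_pointwise (h : (ℤ →₀ ℤ) ≃+ (ℤ →₀ ℤ))
    (hmono : ∀ f g : ℤ →₀ ℤ, f ≤ g → h f ≤ h g)
    (hmono' : ∀ f g : ℤ →₀ ℤ, f ≤ g → h.symm f ≤ h.symm g)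
    (hcomm : ∀ f, h (shiftZ f) = shiftZ (h f))
    (k l : ℕ) (n : Fin k → ℤ) (m : Fin l → ℤ)
    (hn : ∀ i, 1 ≤ n i) (hm : ∀ j, 1 ≤ m j)
    (heq : h (Finsupp.single (0 : ℤ) 1 +
        ∑ i : Fin k, Finsupp.single (((i : ℕ) : ℤ) + 1) (n i))
      = Finsupp.single (0 : ℤ) 1 +
        ∑ j : Fin l, Finsupp.single (((j : ℕ) : ℤ) + 1) (m j)) :
    ∃ hkl : k = l, ∀ i : Fin k, n i = m (Fin.cast hkl i) := by
  -- step 1: h (single 0 1) = single c 1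
  set f := h (Finsupp.single (0:ℤ) 1) with hf
  have hfne : f ≠ 0 := by
    intro h0
    have : Finsupp.single (0:ℤ) 1 = (0 : ℤ →₀ ℤ) := by
      apply h.injective; rw [← hf, h0, map_zero]
    simpa using Finsupp.single_eq_zero.mp this
  have hf0 : (0:ℤ→₀ℤ) ≤ f := by
    have := hmono 0 (Finsupp.single (0:ℤ) 1)
      (by intro x; rw [Finsupp.coe_zero, Pi.zero_apply, Finsupp.single_apply]; split <;> norm_num)
    simpa using this
  obtain ⟨c, hc⟩ := Finsupp.support_nonempty_iff.mpr hfne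
  have hfc : (1:ℤ) ≤ f c := by
    have h1 : f c ≠ 0 := Finsupp.mem_support_iff.mp hc
    have h2 : (0:ℤ) ≤ f c := hf0 c
    omega
  have hsle : Finsupp.single c 1 ≤ f := by
    intro x
    rw [Finsupp.single_apply]
    split
    · next hx => rw [← hx]; exact hfc
    · exact hf0 x
  have hkey : h (Finsupp.single (0:ℤ) 1) = Finsupp.single c 1 := by
    have h1 : h.symm (Finsupp.single c 1) ≤ Finsupp.single (0:ℤ) 1 := by
      have := hmono' _ _ hsle
      rwa [hf, AddEquiv.symm_apply_apply] at this
    have h2 : (0:ℤ→₀ℤ) ≤ h.symm (Finsupp.single c 1) := by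
      have := hmono' 0 (Finsupp.single c 1)
        (by intro x; rw [Finsupp.coe_zero, Pi.zero_apply, Finsupp.single_apply]; split <;> norm_num)
      simpa using this
    have h3 : h.symm (Finsupp.single c 1) ≠ 0 := by
      intro h0
      have : Finsupp.single c (1:ℤ) = 0 := by
        have := congrArg h h0
        rwa [AddEquiv.apply_symm_apply, map_zero] at this
      simpa using Finsupp.single_eq_zero.mp this
    have hmin := min_single _ h2 h3 h1
    have hmin2 := congrArg h hmin
    rw [AddEquiv.apply_symm_apply] at hmin2
    exact hmin2.symm
  -- step 2: h (single t 1) = single (t+c) 1 for all t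
  have hcomm' : ∀ g, h (shiftZ.symm g) = shiftZ.symm (h g) := by
    intro g
    have := hcomm (shiftZ.symm g)
    rw [AddEquiv.apply_symm_apply] at this
    rw [this, AddEquiv.symm_apply_apply]
  have hshift_symm : ∀ t a : ℤ, shiftZ.symm (Finsupp.single t a) = Finsupp.single (t-1) a := by
    intro t a
    apply shiftZ.injective
    rw [AddEquiv.apply_symm_apply, shiftZ_single, sub_add_cancel]
  have hsingle1 : ∀ t : ℤ, h (Finsupp.single t 1) = Finsupp.single (t+c) 1 := by
    intro t
    induction t using Int.induction_on with
    | zero => simpa using hkey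
    | succ i ih =>
        have : Finsupp.single ((i:ℤ)+1) (1:ℤ) = shiftZ (Finsupp.single (i:ℤ) 1) := by
          rw [shiftZ_single]
        rw [this, hcomm, ih, shiftZ_single]
        ring_nf
    | pred i ih =>
        have : Finsupp.single (-(i:ℤ)-1) (1:ℤ) = shiftZ.symm (Finsupp.single (-(i:ℤ)) 1) := by
          rw [hshift_symm]
        rw [this, hcomm', ih, hshift_symm]
        ring_nf
  have hsingle : ∀ t a : ℤ, h (Finsupp.single t a) = Finsupp.single (t+c) a := by
    intro t a
    have h1 : Finsupp.single t a = a • Finsupp.single t (1:ℤ) := by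
      rw [Finsupp.smul_single, smul_eq_mul, mul_one]
    rw [h1, map_zsmul, hsingle1, Finsupp.smul_single, smul_eq_mul, mul_one]
  -- step 3: rewrite heq
  have heq2 : Finsupp.single (c:ℤ) 1 +
      ∑ i : Fin k, Finsupp.single (((i : ℕ) : ℤ) + 1 + c) (n i)
      = Finsupp.single (0 : ℤ) 1 +
      ∑ j : Fin l, Finsupp.single (((j : ℕ) : ℤ) + 1) (m j) := by
    rw [← heq, map_add, map_sum]
    congr 1
    · exact hkey.symm
    · exact Finset.sum_congr rfl fun i _ => (hsingle _ _).symm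
  -- step 4: c = 0
  have hcnonneg : (0:ℤ) ≤ c := by
    by_contra hcneg
    push_neg at hcneg
    have hL := DFunLike.congr_fun heq2 c
    simp only [Finsupp.add_apply] at hL
    rw [Finsupp.single_apply, if_pos rfl] at hL
    rw [sumS_apply_ne k n c c (by intro i; have := (i:ℕ).cast_nonneg (α := ℤ); omega)] at hL
    rw [Finsupp.single_apply, if_neg (by omega)] at hL
    rw [sumS0_apply_ne l m c (by intro j; have := (j:ℕ).cast_nonneg (α := ℤ); omega)] at hL
    omega
  have hc0 : c = 0 := by
    by_contra hcne
    have hcpos : (0:ℤ) < c := lt_of_le_of_ne hcnonneg (Ne.symm hcne)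
    have hL := DFunLike.congr_fun heq2 0
    simp only [Finsupp.add_apply] at hL
    rw [Finsupp.single_apply, if_neg (by omega)] at hL
    rw [sumS_apply_ne k n c 0 (by intro i; have := (i:ℕ).cast_nonneg (α := ℤ); omega)] at hL
    rw [Finsupp.single_apply, if_pos rfl] at hL
    rw [sumS0_apply_ne l m 0 (by intro j; have := (j:ℕ).cast_nonneg (α := ℤ); omega)] at hL
    omega
  subst hc0
  simp only [add_zero] at heq2
  -- step 5: k = l
  have hval := fun t : ℤ => DFunLike.congr_fun heq2 t
  have hkl : k = l := by
    by_contra hne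
    rcases Nat.lt_or_ge k l with hlt | hge
    · -- evaluate at l
      have := hval (l:ℤ)
      simp only [Finsupp.add_apply] at this
      rw [Finsupp.single_apply, if_neg (by omega)] at this
      rw [sumS0_apply_ne k n (l:ℤ) (by intro i; have := i.isLt; omega)] at this
      have h2 := sumS0_apply_at l m ⟨l-1, by omega⟩
      have hidx : ((((⟨l-1, by omega⟩ : Fin l) : ℕ)):ℤ) + 1 = (l:ℤ) := by
        simp only [Fin.val_mk]; omega
      rw [hidx] at h2
      rw [h2] at this
      have := hm ⟨l-1, by omega⟩
      omega
    · have hlt : l < k := by omega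
      have := hval (k:ℤ)
      simp only [Finsupp.add_apply] at this
      rw [Finsupp.single_apply, if_neg (by omega)] at this
      rw [sumS0_apply_ne l m (k:ℤ) (by intro j; have := j.isLt; omega)] at this
      have h2 := sumS0_apply_at k n ⟨k-1, by omega⟩
      have hidx : ((((⟨k-1, by omega⟩ : Fin k) : ℕ)):ℤ) + 1 = (k:ℤ) := by
        simp only [Fin.val_mk]; omega
      rw [hidx] at h2
      rw [h2] at this
      have := hn ⟨k-1, by omega⟩
      omega
  refine ⟨hkl, fun i => ?_⟩
  have := hval (((i:ℕ):ℤ)+1)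
  simp only [Finsupp.add_apply] at this
  rw [Finsupp.single_apply, if_neg (by have := (i:ℕ).cast_nonneg (α := ℤ); omega)] at this
  rw [sumS0_apply_at k n i] at this
  have hji : ((Fin.cast hkl i : Fin l) : ℕ) = (i:ℕ) := rfl
  have h2 := sumS0_apply_at l m (Fin.cast hkl i)
  rw [hji] at h2
  rw [h2] at this
  omega
end

section
/- Let k, ℓ ≥ 1 and let h : ℤ^k → ℤ^ℓ be an order isomorphism (with coordinatewise orders) satisfying h∘σ_k = σ_ℓ∘h. Suppose that for integers n₁, …, n_k ≥ 0 and m₁, …, m_ℓ ≥ 0 one has h(n₁+1, n₂+1, …, n_k+1) = (m₁+1, m₂+1, …, m_ℓ+1). Then k = ℓ and there exists i₀ such that mᵢ = n_{i+i₀} for all i, with indices taken modulo k. -/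
/-- The cyclic shift `σ_k` on `ℤ^k`: `(σ_k x)_i = x_{i-1}` with indices taken
modulo `k`. -/
def cyclicShift (k : ℕ) (x : Fin k → ℤ) : Fin k → ℤ :=
  fun i => x ⟨(i.val + (k - 1)) % k, Nat.mod_lt _ i.pos⟩

lemma single_one_inj {k : ℕ} {a b : Fin k} (h : (Pi.single a 1 : Fin k → ℤ) = Pi.single b 1) :
    a = b := by
  by_contra hab
  have := congrFun h a
  simp [Pi.single_apply, hab] at this

lemma le_single {k : ℕ} (i : Fin k) (z : Fin k → ℤ) (h0 : 0 ≤ z)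
    (hz : z ≤ Pi.single i (1:ℤ)) : z = 0 ∨ z = Pi.single i (1:ℤ) := by
  rcases eq_or_ne (z i) 0 with hzi | hzi
  · left
    funext t
    have h1 := h0 t
    have h2 := hz t
    rcases eq_or_ne t i with rfl | ht
    · simpa using hzi
    · simp only [Pi.single_apply, ht, if_false] at h2
      simpa using le_antisymm h2 h1
  · right
    funext t
    have h1 := h0 t
    have h2 := hz t
    rcases eq_or_ne t i with rfl | ht
    · simp only [Pi.single_apply, if_pos rfl] at h2 ⊢
      simp only [Pi.zero_apply] at h1
      omega
    · simp only [Pi.single_apply, ht, if_false] at h2 ⊢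
      simpa using le_antisymm h2 h1

lemma atom_char {k : ℕ} (x : Fin k → ℤ) (hx0 : 0 ≤ x) (hxne : x ≠ 0)
    (hatom : ∀ y, 0 ≤ y → y ≤ x → y = 0 ∨ y = x) : ∃ j, x = Pi.single j (1:ℤ) := by
  obtain ⟨j, hj⟩ : ∃ j, x j ≠ 0 := by
    by_contra hc
    push_neg at hc
    exact hxne (funext fun t => hc t)
  have h1 : (1:ℤ) ≤ x j := by have := hx0 j; simp only [Pi.zero_apply] at this; omega
  have hle : Pi.single j (1:ℤ) ≤ x := by
    intro t
    rcases eq_or_ne t j with rfl | ht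
    · simpa using h1
    · have := hx0 t
      simpa [Pi.single_apply, ht] using this
  have hge : (0 : Fin k → ℤ) ≤ Pi.single j 1 := by
    intro t
    rcases eq_or_ne t j with rfl | ht
    · simp
    · simp [Pi.single_apply, ht]
  rcases hatom _ hge hle with h0 | h0
  · exfalso
    have := congrFun h0 j
    simp at this
  · exact ⟨j, h0.symm⟩

lemma image_single {k l : ℕ} (h : (Fin k → ℤ) ≃+ (Fin l → ℤ))
    (hmono : ∀ x y : Fin k → ℤ, x ≤ y → h x ≤ h y)
    (hmono' : ∀ x y : Fin l → ℤ, x ≤ y → h.symm x ≤ h.symm y)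
    (i : Fin k) : ∃ j, h (Pi.single i (1:ℤ)) = Pi.single j (1:ℤ) := by
  have hsingle_nonneg : (0 : Fin k → ℤ) ≤ Pi.single i 1 := by
    intro t
    rcases eq_or_ne t i with rfl | ht
    · simp
    · simp [Pi.single_apply, ht]
  apply atom_char
  · have := hmono 0 _ hsingle_nonneg
    simpa using this
  · intro hc
    have : Pi.single i (1:ℤ) = (0 : Fin k → ℤ) := by
      have := congrArg h.symm hc
      simpa using this
    have := congrFun this i
    simp at this
  · intro y hy0 hyle
    have h1 : 0 ≤ h.symm y := by simpa using hmono' 0 y hy0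
    have h2 : h.symm y ≤ Pi.single i 1 := by
      have := hmono' y _ hyle
      rwa [h.symm_apply_apply] at this
    rcases le_single i _ h1 h2 with hz | hz
    · left
      have : h (h.symm y) = h 0 := congrArg h hz
      simpa using this
    · right
      have : h (h.symm y) = h (Pi.single i 1) := congrArg h hz
      simpa using this

lemma shift_mod (k a b : ℕ) (hk : 1 ≤ k) (ha : a < k) (hb : b < k) :
    (a + (k-1)) % k = b ↔ a = (b+1) % k := by
  rcases Nat.eq_zero_or_pos a with rfl | hapos
  · have h1 : (0 + (k-1)) % k = k - 1 := by
      rw [Nat.zero_add, Nat.mod_eq_of_lt (by omega)]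
    rw [h1]
    rcases Nat.lt_or_ge (b+1) k with hb1 | hb1
    · rw [Nat.mod_eq_of_lt hb1]; omega
    · have hbk : b + 1 = k := by omega
      rw [hbk, Nat.mod_self]; omega
  · have h1 : a + (k-1) = (a-1) + k := by omega
    rw [h1, Nat.add_mod_right, Nat.mod_eq_of_lt (by omega)]
    rcases Nat.lt_or_ge (b+1) k with hb1 | hb1
    · rw [Nat.mod_eq_of_lt hb1]; omega
    · have hbk : b + 1 = k := by omega
      rw [hbk, Nat.mod_self]; omega

lemma shift_single {k : ℕ} [NeZero k] (i : Fin k) :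
    cyclicShift k (Pi.single i (1:ℤ)) = Pi.single (i+1) (1:ℤ) := by
  have hk : 1 ≤ k := Nat.pos_of_ne_zero (NeZero.ne k)
  funext j
  simp only [cyclicShift, Pi.single_apply]
  have hv : ((i+1 : Fin k)).val = (i.val + 1) % k := by
    rw [Fin.val_add, Fin.val_one']
    conv_rhs => rw [Nat.add_mod, Nat.mod_eq_of_lt i.isLt]
  have hcond : ((⟨(j.val + (k-1)) % k, Nat.mod_lt _ j.pos⟩ : Fin k) = i) ↔ (j = i + 1) := by
    rw [Fin.ext_iff, Fin.ext_iff, hv]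
    exact shift_mod k j.val i.val hk j.isLt i.isLt
  exact if_congr hcond rfl rfl

/-- An order isomorphism `ℤ^k → ℤ^ℓ` (coordinatewise orders)
intertwining the cyclic shifts and sending `(n₁+1,…,n_k+1)` to
`(m₁+1,…,m_ℓ+1)` (with all `nᵢ, m_j ≥ 0`) forces `k = ℓ` and `mᵢ = n_{i+i₀}`
cyclically for some `i₀`. -/
theorem pointed_K_rigidity_cyclic (k l : ℕ) (hk : 1 ≤ k) (hl : 1 ≤ l)
    (h : (Fin k → ℤ) ≃+ (Fin l → ℤ))
    (hmono : ∀ x y : Fin k → ℤ, x ≤ y → h x ≤ h y)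
    (hmono' : ∀ x y : Fin l → ℤ, x ≤ y → h.symm x ≤ h.symm y)
    (hcomm : ∀ x, h (cyclicShift k x) = cyclicShift l (h x))
    (n : Fin k → ℤ) (m : Fin l → ℤ) (hn : ∀ i, 0 ≤ n i) (hm : ∀ j, 0 ≤ m j)
    (heq : h (fun i => n i + 1) = fun j => m j + 1) :
    ∃ hkl : k = l, ∃ i₀ : ℕ, ∀ i : Fin l,
      m i = n ⟨(i.val + i₀) % k, Nat.mod_lt _ (by omega)⟩ := by
  classical
  haveI : NeZero k := ⟨by omega⟩
  haveI : NeZero l := ⟨by omega⟩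
  choose p hp using fun i => image_single h hmono hmono' i
  choose q hq using fun j =>
    image_single h.symm hmono' (fun x y hxy => by simpa using hmono x y hxy) j
  have hqp : ∀ i, q (p i) = i := by
    intro i
    apply single_one_inj
    rw [← hq (p i), ← hp i, h.symm_apply_apply]
  have hpq : ∀ j, p (q j) = j := by
    intro j
    apply single_one_inj
    rw [← hp (q j), ← hq j, h.apply_symm_apply]
  have hkl : k = l := by
    have := Fintype.card_congr (⟨p, q, hqp, hpq⟩ : Fin k ≃ Fin l)
    simpa using this
  subst hkl
  -- p commutes with +1
  have hpsucc : ∀ i : Fin k, p (i + 1) = p i + 1 := by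
    intro i
    apply single_one_inj
    rw [← hp (i+1), ← shift_single i, hcomm, hp i, shift_single (p i)]
  open Fin.NatCast in
  have hpcast : ∀ t : ℕ, p ((t : Fin k)) = p 0 + (t : Fin k) := by
    intro t
    induction t with
    | zero => simp
    | succ t ih =>
      have : ((t+1 : ℕ) : Fin k) = (t : Fin k) + 1 := by push_cast; ring
      rw [this, hpsucc, ih, add_assoc]
  open Fin.NatCast in
  have hpaff : ∀ j : Fin k, p j = p 0 + j := by
    intro j
    have := hpcast j.val
    rwa [Fin.cast_val_eq_self] at this
  have hqaff : ∀ j : Fin k, q j = q 0 + j := by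
    intro j
    have h1 : p (q j) = p (q 0 + j) := by
      rw [hpq, hpaff (q 0 + j), ← add_assoc, ← hpaff (q 0), hpq]
      simp
    have := congrArg q h1
    rwa [hqp, hqp] at this
  -- formula for h
  have hdecomp : ∀ x : Fin k → ℤ, x = ∑ i, x i • Pi.single i (1:ℤ) := by
    intro x
    funext t
    rw [Finset.sum_apply]
    simp [Pi.single_apply]
  have hformula : ∀ (x : Fin k → ℤ) (j : Fin k), h x j = x (q j) := by
    intro x j
    conv_lhs => rw [hdecomp x, map_sum]
    rw [Finset.sum_apply]
    have hterm : ∀ i : Fin k, h (x i • Pi.single i 1) j = (x i • (Pi.single (p i) (1:ℤ) : Fin k → ℤ)) j := by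
      intro i
      rw [map_zsmul, hp]
    simp only [hterm]
    rw [Finset.sum_eq_single (q j)]
    · rw [hpq]
      simp
    · intro i _ hi
      have : p i ≠ j := fun hc => hi (by rw [← hqp i, hc])
      simp [Pi.smul_apply, Pi.single_apply, Ne.symm this]
    · intro hmem
      exact absurd (Finset.mem_univ _) hmem
  refine ⟨rfl, (q 0).val, ?_⟩
  intro i
  have h1 : h (fun i => n i + 1) i = n (q i) + 1 := hformula _ i
  rw [heq] at h1
  have h2 : q i = ⟨(i.val + (q 0).val) % k, Nat.mod_lt _ (by omega)⟩ := by
    rw [hqaff i]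
    apply Fin.ext
    rw [Fin.val_add, Nat.add_comm]
  rw [h2] at h1
  exact add_right_cancel h1
end
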